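/- arXiv:math/0011072 — 7 statements merged into one kernel-verified Lean document; each statement's English description precedes it below -/
import Mathlib

section
/- Let 1 ≤ u ≤ r and let T be a set of (unsigned) patterns in S_k. Then the number of signed permutations in E_n^r avoiding the homogeneous signed pattern set T_(u) (each pattern of T with all signs equal to u) is given by |E_n^r(T_(u))| = Σ_{j=0}^n j! (r−1)^j |S_{n−j}(T)| C(n,j)^2, where S_m(T) is the set of T-avoiding permutations in S_m. -/
open Finset Equiv

/-- A signed permutation of length `n` with `r` signs: a permutation of `Fin n`
together with a sign in `Fin r` attached to each position. -/
abbrev SignedPerm (n r : ℕ) := Equiv.Perm (Fin n) × (Fin n → Fin r)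

/-- `SPContains p x` : the signed permutation `x` contains the signed pattern `p`,
i.e. there is an increasing sequence of positions on which the symbols of `x` are
order-isomorphic to the symbols of `p` and the signs match exactly. -/
def SPContains {k n r : ℕ} (p : SignedPerm k r) (x : SignedPerm n r) : Prop :=
  ∃ f : Fin k → Fin n, StrictMono f ∧
    (∀ i j : Fin k, p.1 i < p.1 j ↔ x.1 (f i) < x.1 (f j)) ∧
    (∀ i : Fin k, x.2 (f i) = p.2 i)

/-- Classical (unsigned) pattern containment for permutations. -/
def PContains {k m : ℕ} (τ : Equiv.Perm (Fin k)) (σ : Equiv.Perm (Fin m)) : Prop :=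
  ∃ f : Fin k → Fin m, StrictMono f ∧ ∀ i j : Fin k, τ i < τ j ↔ σ (f i) < σ (f j)


/-! Write `x = (π, a)` and `S = {i | a i = u}`. Then `x` contains `τ_(u)` exactly when the pattern
of `π` on the positions `S` contains `τ`. A permutation `π` is determined by the image `π(S)`
together with its patterns on `S` and on `Sᶜ`, and these three can be chosen independently; so
for `|S| = m` there are `C(n, m) |S_m(T)| (n - m)!` admissible `π`, and `(r - 1)^(n - m)` sign
vectors `a` with `u`-set exactly `S`. Summing over `S` and putting `j = n - m` gives the formula. -/

namespace Equiv.Perm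

variable {α : Type*} [LinearOrder α]

theorem eq_of_lt_iff_lt [WellFoundedLT α] {f g : Perm α}
    (h : ∀ i j, f i < f j ↔ g i < g j) : f = g := by
  have hmono : StrictMono (g ∘ f.symm) := fun i j hij => (h _ _).1 (by simpa using hij)
  have hid : g ∘ f.symm = id := (hmono.range_inj strictMono_id).1 <| by
    rw [(g.surjective.comp f.symm.surjective).range_eq, Set.range_id]
  exact Equiv.ext fun x => by simpa using (congrFun hid (f x)).symm

def patternOn (π : Perm α) (S : Finset α) : Perm (Fin #S) :=
  (S.orderIsoOfFin rfl).toEquiv.trans <|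
    (π.subtypeEquiv fun _ => by simp).trans
      ((S.map π.toEmbedding).orderIsoOfFin (card_map _)).symm.toEquiv

theorem orderEmbOfFin_patternOn {π : Perm α} {S W : Finset α} (hW : S.map π.toEmbedding = W)
    (h : #W = #S) (i : Fin #S) :
    W.orderEmbOfFin h (π.patternOn S i) = π (S.orderEmbOfFin rfl i) := by
  subst hW
  simp [patternOn, ← coe_orderIsoOfFin_apply]

theorem patternOn_lt_iff (π : Perm α) (S : Finset α) (i j : Fin #S) :
    π.patternOn S i < π.patternOn S j ↔
      π (S.orderEmbOfFin rfl i) < π (S.orderEmbOfFin rfl j) := by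
  rw [← orderEmbOfFin_patternOn rfl (card_map _), ← orderEmbOfFin_patternOn rfl (card_map _),
    OrderEmbedding.lt_iff_lt]

theorem eqOn_of_patternOn_eq {π₁ π₂ : Perm α} {S : Finset α}
    (hW : S.map π₁.toEmbedding = S.map π₂.toEmbedding) (hp : π₁.patternOn S = π₂.patternOn S) :
    Set.EqOn π₁ π₂ S := by
  intro x hx
  obtain ⟨i, rfl⟩ : x ∈ Set.range (S.orderEmbOfFin rfl) := by rwa [range_orderEmbOfFin]
  rw [← orderEmbOfFin_patternOn rfl (card_map _), ← orderEmbOfFin_patternOn hW.symm, hp]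

section Fintype

variable [Fintype α]

def patternDecomp (S : Finset α) (π : Perm α) :
    Perm (Fin #S) × {W : Finset α // #W = #S} × Perm (Fin #Sᶜ) :=
  (π.patternOn S, ⟨S.map π.toEmbedding, card_map _⟩, π.patternOn Sᶜ)

theorem patternDecomp_injective (S : Finset α) : Function.Injective (patternDecomp S) := by
  intro π₁ π₂ h
  simp only [patternDecomp, Prod.mk.injEq, Subtype.mk.injEq] at h
  obtain ⟨hp, hW, hq⟩ := h
  have map_compl (π : Perm α) : Sᶜ.map π.toEmbedding = (S.map π.toEmbedding)ᶜ := by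
    ext; simp [mem_map_equiv]
  have hWc : Sᶜ.map π₁.toEmbedding = Sᶜ.map π₂.toEmbedding := by
    rw [map_compl, map_compl, hW]
  refine Equiv.ext fun x => ?_
  by_cases hx : x ∈ S
  · exact eqOn_of_patternOn_eq hW hp hx
  · exact eqOn_of_patternOn_eq hWc hq (mem_compl.2 hx)

theorem patternDecomp_bijective (S : Finset α) : Function.Bijective (patternDecomp S) := by
  refine (Fintype.bijective_iff_injective_and_card _).2 ⟨patternDecomp_injective S, ?_⟩
  simp only [Fintype.card_perm, Fintype.card_prod, Fintype.card_fin, Fintype.card_finset_len,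
    card_compl]
  rw [← Nat.choose_mul_factorial_mul_factorial (card_le_univ S)]
  ring

theorem card_subtype_patternOn (S : Finset α) (P : Perm (Fin #S) → Prop) :
    Nat.card {π : Perm α // P (π.patternOn S)} =
      Nat.card {σ // P σ} * (Fintype.card α).choose #S * (Fintype.card α - #S).factorial := by
  have e : {π : Perm α // P (π.patternOn S)} ≃ {σ // P σ} × _ :=
    ((Equiv.ofBijective _ (patternDecomp_bijective S)).subtypeEquiv (q := fun t => P t.1)
      fun _ => Iff.rfl).trans prodSubtypeFstEquivSubtypeProd
  rw [Nat.card_congr e, Nat.card_prod, Nat.card_prod]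
  simp [Nat.card_eq_fintype_card, Fintype.card_perm, card_compl, mul_assoc]

end Fintype

end Equiv.Perm

theorem card_fun_filter_apply_eq {α β : Type*} [Fintype α] [DecidableEq α] [Fintype β]
    [DecidableEq β] (u : β) (S : Finset α) :
    Nat.card {a : α → β // ({i | a i = u} : Finset α) = S} =
      (Fintype.card β - 1) ^ (Fintype.card α - #S) := by
  have h : ({a : α → β | ({i | a i = u} : Finset α) = S} : Finset _) =
      Fintype.piFinset fun i => if i ∈ S then {u} else {u}ᶜ := by
    ext a
    simp only [Finset.ext_iff, mem_filter, mem_univ, true_and, Fintype.mem_piFinset]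
    refine forall_congr' fun i => ?_
    by_cases hi : i ∈ S <;> simp [hi]
  rw [Nat.card_eq_fintype_card, Fintype.card_subtype, h, Fintype.card_piFinset]
  simp [apply_ite, prod_ite, filter_not, ← compl_eq_univ_sdiff, card_compl]

theorem pContains_patternOn_iff {k n : ℕ} (τ : Perm (Fin k)) (π : Perm (Fin n))
    (S : Finset (Fin n)) :
    PContains τ (π.patternOn S) ↔ ∃ f : Fin k → Fin n, StrictMono f ∧
      (∀ i j, τ i < τ j ↔ π (f i) < π (f j)) ∧ ∀ i, f i ∈ S := by
  constructor
  · rintro ⟨g, hg, hord⟩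
    exact ⟨S.orderEmbOfFin rfl ∘ g, (S.orderEmbOfFin rfl).strictMono.comp hg,
      fun i j => (hord i j).trans (π.patternOn_lt_iff S _ _), fun i => orderEmbOfFin_mem S rfl _⟩
  · rintro ⟨f, hf, hord, hS⟩
    refine ⟨fun i => (S.orderIsoOfFin rfl).symm ⟨f i, hS i⟩,
      fun i j hij => (S.orderIsoOfFin rfl).symm.strictMono (hf hij), fun i j => ?_⟩
    rw [hord, Perm.patternOn_lt_iff]
    simp [← coe_orderIsoOfFin_apply]

theorem spContains_const_iff {k n r : ℕ} (τ : Perm (Fin k)) (u : Fin r) (x : SignedPerm n r) :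
    SPContains (τ, fun _ => u) x ↔ PContains τ (x.1.patternOn {i | x.2 i = u}) := by
  simp only [SPContains, pContains_patternOn_iff, mem_filter, mem_univ, true_and]

/-- for a set `T ⊆ S_k` of unsigned patterns and a sign `u`,
`|E_n^r(T_(u))| = Σ_{j=0}^n j! (r-1)^j |S_{n-j}(T)| C(n,j)^2`. -/
theorem card_avoid_homogeneous (n r k : ℕ) (u : Fin r) (T : Set (Equiv.Perm (Fin k))) :
    Nat.card {x : SignedPerm n r // ∀ τ ∈ T, ¬ SPContains (τ, fun _ => u) x} =
    ∑ j ∈ Finset.range (n + 1),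
      j.factorial * (r - 1) ^ j *
        Nat.card {σ : Equiv.Perm (Fin (n - j)) // ∀ τ ∈ T, ¬ PContains τ σ} *
        (n.choose j) ^ 2 := by
  have e : {x : SignedPerm n r // ∀ τ ∈ T, ¬ SPContains (τ, fun _ => u) x} ≃
      Σ S : Finset (Fin n), {π : Perm (Fin n) // ∀ τ ∈ T, ¬ PContains τ (π.patternOn S)} ×
        {a : Fin n → Fin r // ({i | a i = u} : Finset _) = S} :=
    { toFun x := ⟨({i | x.1.2 i = u} : Finset _),
        ⟨x.1.1, by simpa only [spContains_const_iff] using x.2⟩, ⟨x.1.2, rfl⟩⟩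
      invFun := fun ⟨_, π, ⟨a, ha⟩⟩ =>
        ⟨(π.1, a), by subst ha; simpa only [spContains_const_iff] using π.2⟩
      left_inv _ := rfl
      right_inv := fun ⟨_, _, ⟨_, rfl⟩⟩ => rfl }
  have hcard (S : Finset (Fin n)) :=
    Perm.card_subtype_patternOn S fun σ => ∀ τ ∈ T, ¬ PContains τ σ
  rw [Nat.card_congr e, Nat.card_sigma]
  simp only [Nat.card_prod, hcard, card_fun_filter_apply_eq, Fintype.card_fin]
  rw [← powerset_univ, sum_powerset_apply_card fun m =>
    Nat.card {σ : Perm (Fin m) // ∀ τ ∈ T, ¬ PContains τ σ} * n.choose m * (n - m).factorial *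
      (r - 1) ^ (n - m)]
  simp only [card_univ, Fintype.card_fin, smul_eq_mul]
  rw [← sum_range_reflect]
  refine sum_congr rfl fun j hj => ?_
  have hjn : j ≤ n := Nat.lt_succ_iff.mp (mem_range.mp hj)
  rw [add_tsub_cancel_right, Nat.sub_sub_self hjn, Nat.choose_symm hjn]
  ring
end

section
/- Let p_n = |E_n^r(T_{1;1,2,...,r})| where T_{1;1,...,r} = {(1^(1), 2^(a)) : a = 1,...,r}. Then p_n satisfies the recurrence p_n = n(r−1) p_{n−1} + Σ_{i=1}^n C(n−1, i−1) (n−i)! · 0^{n−i} · p_{i−1} for n ≥ 1, with p_0 = 1, and consequently p_n = Π_{j=1}^n (j(r−1)+1). -/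
open Finset Equiv

/-! The smallest entry of an avoiding signed permutation of length `n + 1` can be deleted,
leaving an avoiding permutation of length `n`. Conversely, a new smallest entry may be inserted
at any of the `n + 1` positions with any of the `r - 1` harmless signs, or with the forbidden
sign only at the last position, since an entry with that sign must exceed everything to its
right. Hence `p (n + 1) = ((n + 1) * (r - 1) + 1) * p n`, and in the stated recurrence the
factor `0 ^ (n - i)` kills every term of the sum except `i = n`. -/

lemma spContains_one_fin_two_iff {n r : ℕ} (v : Fin 2 → Fin r) (x : SignedPerm n r) :
    SPContains ((1 : Perm (Fin 2)), v) x ↔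
      ∃ i j, i < j ∧ x.1 i < x.1 j ∧ x.2 i = v 0 ∧ x.2 j = v 1 := by
  constructor
  · rintro ⟨f, hf, hord, hsign⟩
    exact ⟨f 0, f 1, hf Fin.zero_lt_one, (hord 0 1).1 Fin.zero_lt_one, hsign 0, hsign 1⟩
  · rintro ⟨i, j, hij, hx, hi, hj⟩
    refine ⟨![i, j], Fin.strictMono_iff_lt_succ.2 fun k => ?_, fun a b => ?_, fun a => ?_⟩
    · fin_cases k; exact hij
    · fin_cases a <;> fin_cases b <;> simp [hx, hx.asymm]
    · fin_cases a <;> simp [hi, hj]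

/-- Avoidance of `T_{1;1,…,r}`: the paper's sign `1` is `0 : Fin r`. -/
def AvoidsT {n r : ℕ} (x : SignedPerm n r) : Prop :=
  ∀ i j, i < j → (x.2 i : ℕ) = 0 → x.1 j < x.1 i

lemma forall_not_spContains_iff_avoidsT {n r : ℕ} (hr : 0 < r) (x : SignedPerm n r) :
    (∀ v : Fin 2 → Fin r, v 0 = ⟨0, hr⟩ → ¬ SPContains ((1 : Perm (Fin 2)), v) x) ↔
      AvoidsT x := by
  simp only [spContains_one_fin_two_iff, AvoidsT, not_exists, not_and]
  constructor
  · intro h i j hij hi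
    refine (not_lt.1 fun hx => h ![⟨0, hr⟩, x.2 j] rfl i j hij hx (Fin.ext hi) rfl).lt_of_ne ?_
    exact x.1.injective.ne hij.ne'
  · rintro h v hv i j hij hx hi -
    exact (h i j hij (by rw [hi, hv])).asymm hx

section InsertMin

variable {n r : ℕ}

def insertMinPerm (q : Fin (n + 1)) (e : Perm (Fin n)) : Perm (Fin (n + 1)) :=
  ((finSuccEquiv' q).trans e.optionCongr).trans (finSuccEquiv' 0).symm

@[simp]
lemma insertMinPerm_self (q : Fin (n + 1)) (e : Perm (Fin n)) : insertMinPerm q e q = 0 := by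
  simp [insertMinPerm, finSuccEquiv'_at, finSuccEquiv'_symm_none]

@[simp]
lemma insertMinPerm_succAbove (q : Fin (n + 1)) (e : Perm (Fin n)) (i : Fin n) :
    insertMinPerm q e (q.succAbove i) = (e i).succ := by
  simp [insertMinPerm, finSuccEquiv'_succAbove, finSuccEquiv'_symm_some, Fin.zero_succAbove]

lemma forall_not_lt_succAbove_iff_eq_last (q : Fin (n + 1)) :
    (∀ i, ¬ q < q.succAbove i) ↔ q = Fin.last n := by
  simp only [Fin.lt_succAbove_iff_le_castSucc, not_le]
  refine ⟨fun h => ?_, by rintro rfl; exact Fin.castSucc_lt_last⟩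
  by_contra hq
  exact (h (q.castPred hq)).ne (Fin.castSucc_castPred q hq)

def insertMin (t : (Fin (n + 1) × Fin r) × SignedPerm n r) : SignedPerm (n + 1) r :=
  (insertMinPerm t.1.1 t.2.1, Fin.insertNth t.1.1 t.1.2 t.2.2)

lemma insertMin_injective : Function.Injective (insertMin (n := n) (r := r)) := by
  rintro ⟨⟨q, s⟩, e, g⟩ ⟨⟨q', s'⟩, e', g'⟩ h
  simp only [insertMin, Prod.mk.injEq] at h
  obtain ⟨hperm, hsign⟩ := h
  obtain rfl : q = q' := (insertMinPerm q' e').injective <| by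
    rw [← hperm, insertMinPerm_self, hperm, insertMinPerm_self]
  have he : e = e' := Equiv.ext fun i => Fin.succ_injective _ <| by
    simpa using congr($hperm (q.succAbove i))
  have hs : s = s' := by simpa using congr_fun hsign q
  have hg : g = g' := funext fun i => by simpa using congr_fun hsign (q.succAbove i)
  rw [he, hs, hg]

lemma insertMin_bijective : Function.Bijective (insertMin (n := n) (r := r)) := by
  refine (Fintype.bijective_iff_injective_and_card _).2 ⟨insertMin_injective, ?_⟩
  simp only [Fintype.card_prod, Fintype.card_perm, Fintype.card_fin, Fintype.card_fun,
    Nat.factorial_succ]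
  ring

lemma avoidsT_insertMin_iff (q : Fin (n + 1)) (s : Fin r) (y : SignedPerm n r) :
    AvoidsT (insertMin ((q, s), y)) ↔ ((s : ℕ) = 0 → q = Fin.last n) ∧ AvoidsT y := by
  simp only [AvoidsT, Fin.forall_iff_succAbove q, insertMin, Fin.insertNth_apply_same,
    Fin.insertNth_apply_succAbove, insertMinPerm_self, insertMinPerm_succAbove,
    Fin.succAbove_lt_succAbove_iff, Fin.succ_lt_succ_iff, lt_irrefl, Fin.succ_pos, Fin.not_lt_zero,
    false_implies, implies_true, true_and, ← forall_not_lt_succAbove_iff_eq_last]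
  exact and_congr_left' ⟨fun h hs i hi => h i hi hs, fun h i hi hs => h hs i hi⟩

end InsertMin

lemma card_insertMin_choices {n r : ℕ} (hr : 0 < r) :
    Fintype.card {a : Fin (n + 1) × Fin r // (a.2 : ℕ) = 0 → a.1 = Fin.last n} =
      (n + 1) * (r - 1) + 1 := by
  obtain ⟨r, rfl⟩ := Nat.exists_eq_add_one_of_ne_zero hr.ne'
  rw [Fintype.card_subtype, Finset.card_filter, Fintype.sum_prod_type, Fin.sum_univ_castSucc]
  simp [Fin.castSucc_ne_last, Fin.sum_univ_succ]
  ring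

lemma card_avoidsT_succ {r : ℕ} (hr : 0 < r) (n : ℕ) :
    Nat.card {x : SignedPerm (n + 1) r // AvoidsT x} =
      ((n + 1) * (r - 1) + 1) * Nat.card {y : SignedPerm n r // AvoidsT y} := by
  let e := Equiv.ofBijective _ (insertMin_bijective (n := n) (r := r))
  have hsplit :=
    (e.subtypeEquiv fun t => (avoidsT_insertMin_iff t.1.1 t.1.2 t.2).symm).symm.trans
      (Equiv.subtypeProdEquivProd (q := AvoidsT)
        (p := fun a : Fin (n + 1) × Fin r => (a.2 : ℕ) = 0 → a.1 = Fin.last n))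
  rw [Nat.card_congr hsplit, Nat.card_prod, Nat.card_eq_fintype_card, card_insertMin_choices hr]

lemma card_avoidsT {r : ℕ} (hr : 0 < r) (n : ℕ) :
    Nat.card {x : SignedPerm n r // AvoidsT x} = ∏ j ∈ Icc 1 n, (j * (r - 1) + 1) := by
  induction n with
  | zero =>
    rw [Nat.card_congr (Equiv.subtypeUnivEquiv (p := @AvoidsT 0 r) fun _ i => i.elim0)]
    simp [Nat.card_eq_fintype_card]
  | succ n ih => rw [card_avoidsT_succ hr, ih, prod_Icc_succ_top (Nat.le_add_left 1 n), mul_comm]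

lemma sum_Icc_choose_mul_factorial_mul_zero_pow {n : ℕ} (hn : 1 ≤ n) (f : ℕ → ℕ) :
    ∑ i ∈ Icc 1 n, (n - 1).choose (i - 1) * (n - i).factorial * 0 ^ (n - i) * f (i - 1) =
      f (n - 1) := by
  rw [sum_eq_single_of_mem n (mem_Icc.2 ⟨hn, le_rfl⟩)]
  · simp
  · intro i hi hin
    rw [zero_pow (by grind), mul_zero, zero_mul]

/-- with `p_n = |E_n^r(T_{1;1,…,r})|` (avoiding all patterns
`(1^(1),2^(a))`, `a = 1,…,r`), `p` satisfies the stated recurrence and equals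
`Π_{j=1}^n (j(r-1)+1)`. -/
theorem recurrence_T_one_all (r : ℕ) (hr : 0 < r) (p : ℕ → ℕ)
    (hp : ∀ n, p n = Nat.card {x : SignedPerm n r //
        ∀ v : Fin 2 → Fin r, v 0 = ⟨0, hr⟩ →
          ¬ SPContains ((1 : Equiv.Perm (Fin 2)), v) x}) :
    p 0 = 1 ∧
    (∀ n, 1 ≤ n → p n = n * (r - 1) * p (n - 1) +
        ∑ i ∈ Finset.Icc 1 n,
          (n - 1).choose (i - 1) * (n - i).factorial * 0 ^ (n - i) * p (i - 1)) ∧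
    (∀ n, p n = ∏ j ∈ Finset.Icc 1 n, (j * (r - 1) + 1)) := by
  have hprod (n : ℕ) : p n = ∏ j ∈ Icc 1 n, (j * (r - 1) + 1) := by
    rw [hp, ← card_avoidsT hr]
    exact Nat.card_congr (Equiv.subtypeEquivRight (forall_not_spContains_iff_avoidsT hr))
  refine ⟨by simp [hprod], fun n hn => ?_, hprod⟩
  obtain ⟨m, rfl⟩ := Nat.exists_eq_add_of_le' hn
  rw [sum_Icc_choose_mul_factorial_mul_zero_pow hn, hprod, hprod, Nat.add_sub_cancel,
    prod_Icc_succ_top (Nat.le_add_left 1 m)]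
  ring
end

section
/- For all n ≥ 0 and r ≥ 1, the number of signed permutations in E_n^r avoiding T_{1;1,2,...,r} = {(1^(1),2^(a)) : 1 ≤ a ≤ r} is |E_n^r(T_{1;1,...,r})| = Π_{j=1}^{n} ((r−1)j + 1). -/
open Finset Equiv

namespace SPaux

variable {n r : ℕ}

/-- The concrete avoidance condition: no position with sign `0` has a larger
symbol after it. -/
def Av (hr : 0 < r) {n : ℕ} (x : SignedPerm n r) : Prop :=
  ∀ i j : Fin n, i < j → x.1 i < x.1 j → x.2 i ≠ ⟨0, hr⟩

/-- Insert the new smallest value `0` at position `p`. -/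
def liftPerm {n : ℕ} (p : Fin (n + 1)) (σ : Equiv.Perm (Fin n)) :
    Equiv.Perm (Fin (n + 1)) :=
  (finSuccEquiv' p).trans (σ.optionCongr.trans (finSuccEquiv n).symm)

@[simp] lemma liftPerm_self (p : Fin (n + 1)) (σ : Equiv.Perm (Fin n)) :
    liftPerm p σ p = 0 := by
  simp [liftPerm]

@[simp] lemma liftPerm_succAbove (p : Fin (n + 1)) (σ : Equiv.Perm (Fin n)) (i : Fin n) :
    liftPerm p σ (p.succAbove i) = (σ i).succ := by
  simp [liftPerm]

/-- Lift an avoiding signed permutation by inserting value `0` at position `p`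
with sign `t`, where `t = 0` forces `p` to be the last position. -/
def liftSP (hr : 0 < r) {n : ℕ}
    (a : {x : SignedPerm n r // Av hr x})
    (c : {pt : Fin (n + 1) × Fin r // pt.2 = ⟨0, hr⟩ → pt.1 = Fin.last n}) :
    {x : SignedPerm (n + 1) r // Av hr x} :=
  ⟨(liftPerm c.1.1 a.1.1, c.1.1.insertNth c.1.2 a.1.2), by
    obtain ⟨⟨σ, s⟩, ha⟩ := a
    obtain ⟨⟨p, t⟩, hc⟩ := c
    intro i j hij hlt hzero
    dsimp only at hlt hzero
    by_cases hi : i = p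
    · subst hi
      rw [Fin.insertNth_apply_same] at hzero
      have hpl : i ≠ Fin.last n := by
        intro hl
        exact absurd (hl ▸ Fin.le_last j) (not_le.mpr hij)
      exact hpl (hc hzero)
    · obtain ⟨i', rfl⟩ := Fin.exists_succAbove_eq hi
      by_cases hj : j = p
      · subst hj
        rw [liftPerm_self] at hlt
        exact absurd hlt (Fin.not_lt_zero _)
      · obtain ⟨j', rfl⟩ := Fin.exists_succAbove_eq hj
        rw [liftPerm_succAbove, liftPerm_succAbove, Fin.succ_lt_succ_iff] at hlt
        rw [Fin.insertNth_apply_succAbove] at hzero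
        exact ha i' j' ((Fin.strictMono_succAbove p).lt_iff_lt.mp hij) hlt hzero⟩

lemma cardC (hr : 0 < r) (n : ℕ) :
    Nat.card {pt : Fin (n + 1) × Fin r // pt.2 = ⟨0, hr⟩ → pt.1 = Fin.last n}
      = (r - 1) * (n + 1) + 1 := by
  rw [Nat.card_eq_fintype_card, Fintype.card_subtype]
  rw [Finset.card_filter, Fintype.sum_prod_type]
  have hinner : ∀ p : Fin (n + 1),
      (∑ t : Fin r, if (t = ⟨0, hr⟩ → p = Fin.last n) then 1 else 0)
        = (r - 1) + (if p = Fin.last n then 1 else 0) := by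
    intro p
    by_cases hp : p = Fin.last n
    · simp [hp, Finset.card_univ]
      omega
    · have : ∀ t : Fin r, ((t = ⟨0, hr⟩ → p = Fin.last n) ↔ ¬ t = ⟨0, hr⟩) := by
        intro t; simp [hp]
      simp only [this]
      rw [Finset.sum_boole]
      simp only [hp, if_false, add_zero]
      rw [Finset.filter_ne', Finset.card_erase_of_mem (Finset.mem_univ _)]
      simp
  rw [Finset.sum_congr rfl (fun p _ => hinner p)]
  rw [Finset.sum_add_distrib, Finset.sum_const, Finset.sum_ite_eq']
  simp [mul_comm]

lemma step (hr : 0 < r) (n : ℕ) :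
    Nat.card {x : SignedPerm (n + 1) r // Av hr x}
      = Nat.card {x : SignedPerm n r // Av hr x} * ((r - 1) * (n + 1) + 1) := by
  have hbij : Function.Bijective
      (fun y : {x : SignedPerm n r // Av hr x} ×
          {pt : Fin (n + 1) × Fin r // pt.2 = ⟨0, hr⟩ → pt.1 = Fin.last n} =>
        liftSP hr y.1 y.2) := by
    constructor
    · rintro ⟨⟨⟨σ1, s1⟩, h1⟩, ⟨⟨p1, t1⟩, hc1⟩⟩ ⟨⟨⟨σ2, s2⟩, h2⟩, ⟨⟨p2, t2⟩, hc2⟩⟩ heq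
      simp only [liftSP, Subtype.mk.injEq, Prod.mk.injEq] at heq
      obtain ⟨hperm, hsign⟩ := heq
      have hp : p1 = p2 := by
        have h1' : liftPerm p2 σ2 p1 = 0 := by rw [← hperm]; simp
        have h2' : liftPerm p2 σ2 p2 = 0 := by simp
        exact (liftPerm p2 σ2).injective (h1'.trans h2'.symm)
      subst hp
      have hσ : σ1 = σ2 := by
        apply Equiv.ext
        intro i
        have h := DFunLike.congr_fun hperm (p1.succAbove i)
        simp only [liftPerm_succAbove] at h
        exact Fin.succ_injective _ h
      have ht : t1 = t2 := by
        have h := congrFun hsign p1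
        rwa [Fin.insertNth_apply_same, Fin.insertNth_apply_same] at h
      have hs : s1 = s2 := by
        funext i
        have h := congrFun hsign (p1.succAbove i)
        rwa [Fin.insertNth_apply_succAbove, Fin.insertNth_apply_succAbove] at h
      subst hσ ht hs
      rfl
    · rintro ⟨⟨σ, s⟩, h⟩
      have hσp : σ (σ.symm 0) = 0 := σ.apply_symm_apply 0
      set p : Fin (n + 1) := σ.symm 0 with hpdef
      have hne : ∀ i : Fin n, σ (p.succAbove i) ≠ 0 := by
        intro i hi
        exact Fin.succAbove_ne p i (σ.injective (hi.trans hσp.symm))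
      have hfinj : Function.Injective fun i => (σ (p.succAbove i)).pred (hne i) := by
        intro i j hij
        apply Fin.succAbove_right_injective (p := p)
        apply σ.injective
        have := congrArg Fin.succ hij
        simpa [Fin.succ_pred] using this
      let σ' : Equiv.Perm (Fin n) :=
        Equiv.ofBijective _ (Finite.injective_iff_bijective.mp hfinj)
      have hσ' : ∀ i, (σ' i).succ = σ (p.succAbove i) := fun i => Fin.succ_pred (σ (p.succAbove i)) (hne i)
      have hAv' : Av hr (σ', fun i => s (p.succAbove i)) := by
        intro i j hij hlt hz
        refine h (p.succAbove i) (p.succAbove j) ((Fin.strictMono_succAbove p) hij) ?_ hz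
        rw [← hσ' i, ← hσ' j]
        exact Fin.succ_lt_succ_iff.mpr hlt
      have hc : s p = ⟨0, hr⟩ → p = Fin.last n := by
        intro ht
        by_contra hl
        have hplt : p < Fin.last n := lt_of_le_of_ne (Fin.le_last p) hl
        have hlast : σ p < σ (Fin.last n) := by
          rw [hσp]
          refine Fin.pos_of_ne_zero fun h0 => hl ?_
          have := σ.injective (h0.trans hσp.symm)
          exact this.symm ▸ this ▸ rfl
        exact h p (Fin.last n) hplt hlast ht
      refine ⟨⟨⟨(σ', fun i => s (p.succAbove i)), hAv'⟩, ⟨(p, s p), hc⟩⟩, ?_⟩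
      apply Subtype.ext
      dsimp [liftSP]
      refine Prod.ext ?_ ?_
      · apply Equiv.ext
        intro j
        rcases eq_or_ne j p with rfl | hj
        · rw [liftPerm_self, hσp]
        · obtain ⟨i, rfl⟩ := Fin.exists_succAbove_eq hj
          rw [liftPerm_succAbove, hσ']
      · funext j
        dsimp only
        rcases eq_or_ne j p with rfl | hj
        · rw [Fin.insertNth_apply_same]
        · obtain ⟨i, rfl⟩ := Fin.exists_succAbove_eq hj
          rw [Fin.insertNth_apply_succAbove]
  rw [Nat.card_congr (Equiv.ofBijective _ hbij).symm, Nat.card_prod, cardC hr n]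

lemma key (r : ℕ) (hr : 0 < r) :
    ∀ n, Nat.card {x : SignedPerm n r // Av hr x}
      = ∏ j ∈ Finset.Icc 1 n, ((r - 1) * j + 1)
  | 0 => by
    haveI : Unique {x : SignedPerm 0 r // Av hr x} :=
      ⟨⟨⟨(1, fun i => i.elim0), fun i => i.elim0⟩⟩,
        fun y => Subtype.ext (Prod.ext (Equiv.ext fun i => i.elim0)
          (funext fun i => i.elim0))⟩
    simp [Nat.card_unique]
  | (n + 1) => by
    rw [step hr n, key r hr n, Finset.prod_Icc_succ_top (by omega)]

end SPaux

/-- `|E_n^r(T_{1;1,2,…,r})| = Π_{j=1}^n ((r-1)j + 1)`. -/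
theorem card_avoid_T_one_all (n r : ℕ) (hr : 0 < r) :
    Nat.card {x : SignedPerm n r //
        ∀ v : Fin 2 → Fin r, v 0 = ⟨0, hr⟩ →
          ¬ SPContains ((1 : Equiv.Perm (Fin 2)), v) x} =
      ∏ j ∈ Finset.Icc 1 n, ((r - 1) * j + 1) := by
  have hiff : ∀ x : SignedPerm n r,
      (∀ v : Fin 2 → Fin r, v 0 = ⟨0, hr⟩ →
        ¬ SPContains ((1 : Equiv.Perm (Fin 2)), v) x) ↔ SPaux.Av hr x := by
    intro x
    constructor
    · intro H i j hij hlt hz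
      refine H ![⟨0, hr⟩, x.2 j] (by simp) ⟨![i, j], ?_, ?_, ?_⟩
      · intro a b hab
        fin_cases a <;> fin_cases b <;> simp_all <;> omega
      · intro a b
        fin_cases a <;> fin_cases b <;>
          simp [Equiv.Perm.one_apply, hlt, lt_asymm hlt]
      · intro a
        fin_cases a <;> simp [hz]
    · intro H v hv hcon
      obtain ⟨f, hf, hordiff, hsgn⟩ := hcon
      have h01 : (0 : Fin 2) < 1 := by decide
      have hlt : x.1 (f 0) < x.1 (f 1) := (hordiff 0 1).mp (by simpa using h01)
      exact H (f 0) (f 1) (hf h01) hlt (by rw [hsgn 0]; exact hv)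
  rw [Nat.card_congr (Equiv.subtypeEquivRight hiff)]
  exact SPaux.key r hr n
end

section
/- Let d ≤ l ≤ r and let a_1,...,a_l ∈ {1,...,r} be distinct. Let T = {(1,2) with both signs a_i : i = 1,...,d} ∪ {(2,1) with both signs a_i : i = d+1,...,l}. Then |E_n^r(T)| = Σ_{i_1+...+i_l ≤ n} [n!/(i_1!···i_l!(n−Σi_j)!)]^2 · (n−Σi_j)! · (r−l)^{n−Σi_j}. -/
open Finset Equiv

namespace CAux

variable {n r l : ℕ}

noncomputable def blk (a : Fin l → Fin r) (c : Fin n → Fin r) (p : Fin n) : Option (Fin l) :=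
  Function.partialInv a (c p)

def Mono (d : ℕ) (a : Fin l → Fin r) (c : Fin n → Fin r) (σ : Equiv.Perm (Fin n)) : Prop :=
  ∀ i : Fin l, ∀ p q : Fin n, p < q → blk a c p = some i → blk a c q = some i →
    (if (i : ℕ) < d then σ q < σ p else σ p < σ q)

lemma spc_one {b : Fin r} {σ : Equiv.Perm (Fin n)} {c : Fin n → Fin r} :
    SPContains ((1 : Equiv.Perm (Fin 2)), fun _ => b) (σ, c) ↔
      ∃ p q : Fin n, p < q ∧ σ p < σ q ∧ c p = b ∧ c q = b := by
  constructor
  · rintro ⟨f, hf, hord, hcol⟩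
    exact ⟨f 0, f 1, hf (by decide),
      (hord 0 1).mp (show (1 : Equiv.Perm (Fin 2)) 0 < (1 : Equiv.Perm (Fin 2)) 1 by decide),
      hcol 0, hcol 1⟩
  · rintro ⟨p, q, hpq, hσ, hp, hq⟩
    refine ⟨![p, q], ?_, ?_, ?_⟩
    · intro u v huv
      fin_cases u <;> fin_cases v <;> simp_all <;> omega
    · intro u v
      fin_cases u <;> fin_cases v <;>
        simp [Equiv.Perm.one_apply, hσ, lt_asymm hσ, lt_irrefl]
    · intro u; fin_cases u <;> simp [hp, hq]
  
lemma spc_swap {b : Fin r} {σ : Equiv.Perm (Fin n)} {c : Fin n → Fin r} :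
    SPContains ((Equiv.swap 0 1 : Equiv.Perm (Fin 2)), fun _ => b) (σ, c) ↔
      ∃ p q : Fin n, p < q ∧ σ q < σ p ∧ c p = b ∧ c q = b := by
  constructor
  · rintro ⟨f, hf, hord, hcol⟩
    refine ⟨f 0, f 1, hf (by decide),
      (hord 1 0).mp (show (Equiv.swap 0 1 : Equiv.Perm (Fin 2)) 1 <
        (Equiv.swap 0 1 : Equiv.Perm (Fin 2)) 0 by decide), hcol 0, hcol 1⟩
  · rintro ⟨p, q, hpq, hσ, hp, hq⟩
    refine ⟨![p, q], ?_, ?_, ?_⟩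
    · intro u v huv
      fin_cases u <;> fin_cases v <;> simp_all <;> omega
    · intro u v
      fin_cases u <;> fin_cases v <;>
        simp [Equiv.swap_apply_left, Equiv.swap_apply_right, hσ, lt_asymm hσ, lt_irrefl]
    · intro u; fin_cases u <;> simp [hp, hq]

lemma blk_eq_some_iff {a : Fin l → Fin r} (ha : Function.Injective a)
    {c : Fin n → Fin r} {p : Fin n} {i : Fin l} :
    blk a c p = some i ↔ c p = a i := by
  unfold blk
  constructor
  · intro h; exact ((Function.partialInv_of_injective ha) i (c p)).mp h |>.symm
  · intro h; rw [h]; exact Function.partialInv_left ha i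

lemma avoid_iff {d : ℕ} {a : Fin l → Fin r} (ha : Function.Injective a) (x : SignedPerm n r) :
    (∀ i : Fin l, ¬ SPContains
          (((if (i : ℕ) < d then 1 else Equiv.swap 0 1) : Equiv.Perm (Fin 2)),
            fun _ => a i) x) ↔ Mono d a x.2 x.1 := by
  obtain ⟨σ, c⟩ := x
  dsimp only
  constructor
  · intro h i p q hpq hp hq
    rw [blk_eq_some_iff ha] at hp hq
    have hne : σ p ≠ σ q := fun hEq => (hpq.ne) (σ.injective hEq)
    have hni := h i
    by_cases hi : (i : ℕ) < d
    · simp only [hi, if_true] at hni ⊢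
      rw [spc_one] at hni
      push_neg at hni
      rcases lt_or_gt_of_ne hne with h1 | h1
      · exact absurd hq (hni p q hpq h1 hp)
      · exact h1
    · simp only [hi, if_false] at hni ⊢
      rw [spc_swap] at hni
      push_neg at hni
      rcases lt_or_gt_of_ne hne with h1 | h1
      · exact h1
      · exact absurd hq (hni p q hpq h1 hp)
  · intro hM i
    by_cases hi : (i : ℕ) < d
    · simp only [hi, if_true]
      rw [spc_one]
      rintro ⟨p, q, hpq, hσ, hp, hq⟩
      have := hM i p q hpq ((blk_eq_some_iff ha).mpr hp) ((blk_eq_some_iff ha).mpr hq)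
      simp only [hi, if_true] at this
      exact absurd hσ (lt_asymm this)
    · simp only [hi, if_false]
      rw [spc_swap]
      rintro ⟨p, q, hpq, hσ, hp, hq⟩
      have := hM i p q hpq ((blk_eq_some_iff ha).mpr hp) ((blk_eq_some_iff ha).mpr hq)
      simp only [hi, if_false] at this
      exact absurd hσ (lt_asymm this)

noncomputable def cnt (g : Fin n → Option (Fin l)) (o : Option (Fin l)) : ℕ :=
  Nat.card {p // g p = o}

abbrev OPart (n l : ℕ) (j : Fin l → ℕ) : Type :=
  {g : Fin n → Option (Fin l) // ∀ i, cnt g (some i) = j i}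

lemma sum_cnt (g : Fin n → Option (Fin l)) : ∑ o : Option (Fin l), cnt g o = n := by
  classical
  unfold cnt
  simp only [Nat.card_eq_fintype_card]
  rw [← Fintype.card_sigma, Fintype.card_congr (Equiv.sigmaFiberEquiv g)]
  simp

lemma sum_cnt_some_le (g : Fin n → Option (Fin l)) : ∑ i, cnt g (some i) ≤ n := by
  have := sum_cnt g
  rw [Fintype.sum_option] at this; omega

lemma cnt_none_eq (g : Fin n → Option (Fin l)) :
    cnt g none = n - ∑ i, cnt g (some i) := by
  have := sum_cnt g; rw [Fintype.sum_option] at this; omega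

lemma cnt_le (g : Fin n → Option (Fin l)) (o : Option (Fin l)) : cnt g o ≤ n := by
  classical
  unfold cnt; rw [Nat.card_eq_fintype_card]
  simpa using Fintype.card_subtype_le (fun p => g p = o)

def sz (n : ℕ) (j : Fin l → ℕ) (o : Option (Fin l)) : ℕ := o.elim (n - ∑ i, j i) j

noncomputable def feq {j : Fin l → ℕ} (e : Fin n ≃ Σ o : Option (Fin l), Fin (sz n j o))
    (o : Option (Fin l)) : {p // (e p).1 = o} ≃ Fin (sz n j o) where
  toFun p := Fin.cast (by rw [p.2]) (e p.1).2
  invFun v := ⟨e.symm ⟨o, v⟩, by simp⟩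
  left_inv p := by
    obtain ⟨p, hp⟩ := p
    subst hp
    exact Subtype.ext (e.symm_apply_apply p)
  right_inv v :=
    Fin.ext (congrArg (fun x : Σ o : Option (Fin l), Fin (sz n j o) => (x.2 : ℕ))
      (e.apply_symm_apply ⟨o, v⟩))

noncomputable def partEquiv (j : Fin l → ℕ) :
    (Fin n ≃ Σ o : Option (Fin l), Fin (sz n j o)) ≃
      Σ g : OPart n l j, ∀ o, {p // g.1 p = o} ≃ Fin (sz n j o) where
  toFun e := ⟨⟨fun p => (e p).1, fun i => Nat.card_eq_of_equiv_fin (feq e (some i))⟩, feq e⟩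
  invFun gF := (Equiv.sigmaFiberEquiv gF.1.1).symm.trans (Equiv.sigmaCongrRight gF.2)
  left_inv e := Equiv.ext fun p => rfl
  right_inv gF := by
    obtain ⟨g, F⟩ := gF
    refine Sigma.ext (Subtype.ext rfl) (heq_of_eq ?_)
    funext o
    apply Equiv.ext
    rintro ⟨p, hp⟩
    subst hp
    apply Fin.ext
    rfl

lemma part_card (j : Fin l → ℕ) (hj : ∑ i, j i ≤ n) :
    Nat.card (OPart n l j) * ((∏ i, (j i).factorial) * (n - ∑ i, j i).factorial)
      = n.factorial := by
  classical
  have hcards : Fintype.card (Σ o : Option (Fin l), Fin (sz n j o)) = n := by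
    rw [Fintype.card_sigma, Fintype.sum_option]
    simp only [Fintype.card_fin]
    simp only [Fintype.card_fin, sz, Option.elim]
    omega
  have h1 : Nat.card (Fin n ≃ Σ o : Option (Fin l), Fin (sz n j o)) = n.factorial := by
    rw [Nat.card_eq_fintype_card,
      Fintype.card_equiv (Fintype.equivOfCardEq (by simp [hcards]))]
    simp
  rw [← h1, Nat.card_congr (partEquiv j)]
  simp only [Nat.card_eq_fintype_card]
  rw [Fintype.card_sigma]
  have hterm : ∀ g : OPart n l j, Fintype.card (∀ o, {p // g.1 p = o} ≃ Fin (sz n j o))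
      = (∏ i, (j i).factorial) * (n - ∑ i, j i).factorial := by
    intro g
    rw [Fintype.card_pi]
    have hfib : ∀ o, Fintype.card {p // g.1 p = o} = sz n j o := by
      intro o
      rw [← Nat.card_eq_fintype_card]
      match o with
      | some i => exact g.2 i
      | none =>
        show cnt g.1 none = _
        rw [cnt_none_eq]
        simp only [sz, Option.elim]
        congr 1
        exact Finset.sum_congr rfl fun i _ => g.2 i
    have : ∀ o : Option (Fin l), Fintype.card ({p // g.1 p = o} ≃ Fin (sz n j o))
        = (sz n j o).factorial := by
      intro o
      rw [Fintype.card_equiv (Fintype.equivOfCardEq (by simp [hfib o]))]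
      rw [hfib o]
    rw [Finset.prod_congr rfl fun o _ => this o, Fintype.prod_option]
    simp only [sz, Option.elim]
    ring
  rw [Finset.sum_congr rfl fun g _ => hterm g, Finset.sum_const, Finset.card_univ,
    smul_eq_mul]

open Classical in
noncomputable def fib (h : Fin n → Option (Fin l)) (i : Fin l) : Finset (Fin n) :=
  univ.filter (fun p => h p = some i)

lemma fib_card (h : Fin n → Option (Fin l)) (i : Fin l) :
    (fib h i).card = cnt h (some i) := by
  classical
  rw [cnt, Nat.card_eq_fintype_card, Fintype.card_subtype]
  congr 1

lemma mem_fib {h : Fin n → Option (Fin l)} {i : Fin l} {p : Fin n} :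
    p ∈ fib h i ↔ h p = some i := by
  classical
  simp [fib]

noncomputable def mEquiv (d : ℕ) (h1 h2 : Fin n → Option (Fin l)) (i : Fin l)
    (hc : cnt h2 (some i) = cnt h1 (some i)) :
    {p // h1 p = some i} ≃ {v // h2 v = some i} :=
  (Equiv.subtypeEquivRight (fun p => (mem_fib (h := h1)).symm)).trans <|
    ((fib h1 i).orderIsoOfFin (fib_card h1 i)).toEquiv.symm.trans <|
      ((if (i : ℕ) < d then Fin.revPerm else Equiv.refl _).trans <|
        (((fib h2 i).orderIsoOfFin (by rw [fib_card h2 i, hc])).toEquiv).trans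
          (Equiv.subtypeEquivRight (fun v => mem_fib)))

lemma mEquiv_val (d : ℕ) (h1 h2 : Fin n → Option (Fin l)) (i : Fin l)
    (hc : cnt h2 (some i) = cnt h1 (some i)) (p : {p // h1 p = some i}) :
    ((mEquiv d h1 h2 i hc) p).val =
      (fib h2 i).orderEmbOfFin (by rw [fib_card h2 i, hc])
        ((if (i : ℕ) < d then Fin.revPerm else Equiv.refl _)
          (((fib h1 i).orderIsoOfFin (fib_card h1 i)).symm ⟨p.1, mem_fib.mpr p.2⟩)) := rfl


section MonoCard

variable (d : ℕ) (a : Fin l → Fin r) (c : Fin n → Fin r)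

noncomputable def Phi (g : Fin n → Option (Fin l))
    (hg : ∀ i, cnt g (some i) = cnt (blk a c) (some i))
    (e : {p // blk a c p = none} ≃ {v // g v = none}) :
    ∀ o : Option (Fin l), {p // blk a c p = o} ≃ {v // g v = o}
  | none => e
  | some i => mEquiv d (blk a c) g i (hg i)

lemma Phi_val_congr {b g : Fin n → Option (Fin l)}
    (Φ : ∀ o : Option (Fin l), {p // b p = o} ≃ {v // g v = o})
    {o o' : Option (Fin l)} (h : o = o') {p : Fin n} (hp : b p = o) (hp' : b p = o') :
    (Φ o ⟨p, hp⟩).val = (Φ o' ⟨p, hp'⟩).val := by subst h; rfl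

noncomputable def bwd
    (gF : Σ g : OPart n l (fun i => cnt (blk a c) (some i)),
      ({p // blk a c p = none} ≃ {v // g.1 v = none})) : Equiv.Perm (Fin n) :=
  Equiv.ofFiberEquiv (Phi d a c gF.1.1 gF.1.2 gF.2)

lemma bwd_apply (gF) (p : Fin n) :
    bwd d a c gF p = (Phi d a c gF.1.1 gF.1.2 gF.2 (blk a c p) ⟨p, rfl⟩).val := rfl

lemma bwd_mono (gF) : Mono d a c (bwd d a c gF) := by
  intro i p q hpq hp hq
  rw [bwd_apply, bwd_apply, Phi_val_congr _ hp rfl hp, Phi_val_congr _ hq rfl hq]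
  show (if (i : ℕ) < d then
      (Phi d a c gF.1.1 gF.1.2 gF.2 (some i) ⟨q, hq⟩).val <
        (Phi d a c gF.1.1 gF.1.2 gF.2 (some i) ⟨p, hp⟩).val
    else _ < _)
  simp only [Phi, mEquiv_val]
  by_cases hi : (i : ℕ) < d
  · simp only [hi, if_true, Fin.revPerm_apply]
    apply ((fib gF.1.1 i).orderEmbOfFin _).strictMono
    rw [Fin.rev_lt_rev]
    exact (((fib (blk a c) i).orderIsoOfFin _).symm).strictMono (Subtype.mk_lt_mk.mpr hpq)
  · simp only [hi, if_false, Equiv.refl_apply]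
    apply ((fib gF.1.1 i).orderEmbOfFin _).strictMono
    exact (((fib (blk a c) i).orderIsoOfFin _).symm).strictMono (Subtype.mk_lt_mk.mpr hpq)

noncomputable def fwdG (σ : Equiv.Perm (Fin n)) :
    OPart n l (fun i => cnt (blk a c) (some i)) :=
  ⟨fun v => blk a c (σ.symm v), fun i =>
    Nat.card_congr (Equiv.subtypeEquiv σ.symm (fun v => Iff.rfl))⟩

noncomputable def fwdE (σ : Equiv.Perm (Fin n)) :
    {p // blk a c p = none} ≃ {v // blk a c (σ.symm v) = none} :=
  Equiv.subtypeEquiv (σ : Fin n ≃ Fin n) (fun p => by rw [Equiv.symm_apply_apply])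

lemma bwd_fwd (σ : Equiv.Perm (Fin n)) (hM : Mono d a c σ) :
    bwd d a c ⟨fwdG a c σ, fwdE a c σ⟩ = σ := by
  apply Equiv.ext; intro p
  rw [bwd_apply]
  obtain ⟨o, hbp⟩ : ∃ o, blk a c p = o := ⟨_, rfl⟩
  rw [Phi_val_congr _ hbp rfl hbp]
  match o, hbp with
  | none, hbp => rfl
  | some i, hbp =>
    show (mEquiv d (blk a c) (fun v => blk a c (σ.symm v)) i
      ((fwdG a c σ).2 i) ⟨p, hbp⟩).val = σ p
    set b := blk a c with hb
    set g : Fin n → Option (Fin l) := fun v => b (σ.symm v) with hgdef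
    have hgcard : (fib g i).card = cnt b (some i) := by
      rw [fib_card]; exact (fwdG a c σ).2 i
    set F : Fin (cnt b (some i)) → Fin n :=
      fun u => σ ((fib b i).orderEmbOfFin (fib_card b i) u) with hF
    have hblk : ∀ t, b ((fib b i).orderEmbOfFin (fib_card b i) t) = some i :=
      fun t => mem_fib.mp (Finset.orderEmbOfFin_mem _ _ _)
    have hmem : ∀ t, F t ∈ fib g i := by
      intro t
      rw [mem_fib]
      show b (σ.symm (σ _)) = some i
      rw [Equiv.symm_apply_apply]
      exact hblk t
    have hemb : ∀ (x : {p // b p = some i}),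
        (fib b i).orderEmbOfFin (fib_card b i)
          (((fib b i).orderIsoOfFin (fib_card b i)).symm ⟨x.1, mem_fib.mpr x.2⟩) = x.1 := by
      intro x
      rw [← Finset.coe_orderIsoOfFin_apply, OrderIso.apply_symm_apply]
    refine (mEquiv_val d _ _ i _ _).trans ?_
    by_cases hi : (i : ℕ) < d
    · have hanti : StrictAnti F := by
        intro t t' h
        have hlt := ((fib b i).orderEmbOfFin (fib_card b i)).strictMono h
        have := hM i _ _ hlt (hblk t) (hblk t')
        simpa [hi] using this
      have hmono : StrictMono (F ∘ Fin.rev) := by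
        intro t t' h
        exact hanti (Fin.rev_lt_rev.mpr h)
      have huniq := Finset.orderEmbOfFin_unique hgcard (fun x => hmem _) hmono
      simp only [hi, if_true, Fin.revPerm_apply]
      rw [← huniq]
      show F (Fin.rev (Fin.rev _)) = σ p
      rw [Fin.rev_rev]
      show σ ((fib b i).orderEmbOfFin (fib_card b i) _) = σ p
      exact congrArg σ (hemb ⟨p, hbp⟩)
    · have hmono : StrictMono F := by
        intro t t' h
        have hlt := ((fib b i).orderEmbOfFin (fib_card b i)).strictMono h
        have := hM i _ _ hlt (hblk t) (hblk t')
        simpa [hi] using this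
      have huniq := Finset.orderEmbOfFin_unique hgcard (fun x => hmem _) hmono
      simp only [hi, if_false, Equiv.refl_apply]
      rw [← huniq]
      exact congrArg σ (hemb ⟨p, hbp⟩)

lemma pair_ext {b : Fin n → Option (Fin l)} {J : Fin l → ℕ}
    (x y : Σ g : OPart n l J, ({p // b p = none} ≃ {v // g.1 v = none}))
    (h1 : x.1.1 = y.1.1) (h2 : ∀ p, (x.2 p).val = (y.2 p).val) : x = y := by
  obtain ⟨⟨g1, hg1⟩, e1⟩ := x
  obtain ⟨⟨g2, hg2⟩, e2⟩ := y
  dsimp at h1 h2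
  subst h1
  refine Sigma.ext rfl (heq_of_eq ?_)
  exact Equiv.ext fun p => Subtype.ext (h2 p)

noncomputable def monoEquiv : {σ : Equiv.Perm (Fin n) // Mono d a c σ} ≃
    Σ g : OPart n l (fun i => cnt (blk a c) (some i)),
      ({p // blk a c p = none} ≃ {v // g.1 v = none}) where
  toFun σs := ⟨fwdG a c σs.1, fwdE a c σs.1⟩
  invFun gF := ⟨bwd d a c gF, bwd_mono d a c gF⟩
  left_inv σs := Subtype.ext (bwd_fwd d a c σs.1 σs.2)
  right_inv gF := by
    refine pair_ext _ _ ?_ ?_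
    · funext v
      show blk a c ((bwd d a c gF).symm v) = gF.1.1 v
      have := Equiv.ofFiberEquiv_map (Phi d a c gF.1.1 gF.1.2 gF.2) ((bwd d a c gF).symm v)
      rw [show Equiv.ofFiberEquiv (Phi d a c gF.1.1 gF.1.2 gF.2) ((bwd d a c gF).symm v)
        = bwd d a c gF ((bwd d a c gF).symm v) from rfl, Equiv.apply_symm_apply] at this
      exact this.symm
    · intro p
      show (bwd d a c gF p.1 : Fin n) = (gF.2 p).val
      rw [bwd_apply, Phi_val_congr _ p.2 rfl p.2]
      rfl

lemma mono_card :
    Nat.card {σ : Equiv.Perm (Fin n) // Mono d a c σ} =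
      Nat.card (OPart n l (fun i => cnt (blk a c) (some i))) *
        (n - ∑ i, cnt (blk a c) (some i)).factorial := by
  classical
  rw [Nat.card_congr (monoEquiv d a c)]
  simp only [Nat.card_eq_fintype_card]
  rw [Fintype.card_sigma]
  have hterm : ∀ g : OPart n l (fun i => cnt (blk a c) (some i)),
      Fintype.card ({p // blk a c p = none} ≃ {v // g.1 v = none})
        = (n - ∑ i, cnt (blk a c) (some i)).factorial := by
    intro g
    have h1 : Fintype.card {p // blk a c p = none}
        = n - ∑ i, cnt (blk a c) (some i) := by
      rw [← Nat.card_eq_fintype_card]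
      exact cnt_none_eq (blk a c)
    have h2 : Fintype.card {v // g.1 v = none}
        = n - ∑ i, cnt (blk a c) (some i) := by
      rw [← Nat.card_eq_fintype_card]
      show cnt g.1 none = _
      rw [cnt_none_eq]
      congr 1
      exact Finset.sum_congr rfl fun i _ => g.2 i
    rw [Fintype.card_equiv (Fintype.equivOfCardEq (by rw [h1, h2])), h1]
  rw [Finset.sum_congr rfl fun g _ => hterm g, Finset.sum_const, Finset.card_univ, smul_eq_mul]

end MonoCard

section ColorCard

variable (a : Fin l → Fin r)

lemma partialInv_eq_none_iff {b : Fin r} :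
    Function.partialInv a b = none ↔ ¬∃ i, a i = b := by
  unfold Function.partialInv
  split <;> simp_all

lemma rest_card (ha : Function.Injective a) :
    Nat.card {b : Fin r // Function.partialInv a b = none} = r - l := by
  classical
  rw [Nat.card_congr (Equiv.subtypeEquivRight (fun b => partialInv_eq_none_iff a))]
  have h2 : Nat.card {b : Fin r // ∃ i, a i = b} = l := by
    have e1 : {b : Fin r // ∃ i, a i = b} ≃ Fin l :=
      (Equiv.subtypeEquivRight (q := fun b => b ∈ Set.range a) (fun b => Iff.rfl)).trans
        (Equiv.ofInjective a ha).symm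
    rw [Nat.card_congr e1, Nat.card_eq_fintype_card, Fintype.card_fin]
  rw [Nat.card_eq_fintype_card, Fintype.card_subtype_compl, Fintype.card_fin,
    ← Nat.card_eq_fintype_card, h2]

variable {j : Fin l → ℕ}

noncomputable def bwdC
    (gh : Σ g : OPart n l j, ({p // g.1 p = none} → {b : Fin r // Function.partialInv a b = none}))
    (p : Fin n) : Fin r :=
  if hp : (gh.1.1 p).isSome then a ((gh.1.1 p).get hp)
  else (gh.2 ⟨p, Option.not_isSome_iff_eq_none.mp hp⟩).val

lemma bwdC_some (gh : Σ g : OPart n l j,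
      ({p // g.1 p = none} → {b : Fin r // Function.partialInv a b = none})) (p : Fin n) (i : Fin l) (hp : gh.1.1 p = some i) :
    bwdC a gh p = a i := by
  unfold bwdC
  rw [dif_pos (by simp [hp])]
  exact congrArg a (Option.get_of_mem _ (Option.mem_def.mpr hp))

lemma bwdC_none (gh : Σ g : OPart n l j,
      ({p // g.1 p = none} → {b : Fin r // Function.partialInv a b = none})) (p : Fin n) (hp : gh.1.1 p = none) :
    bwdC a gh p = (gh.2 ⟨p, hp⟩).val := by
  unfold bwdC
  rw [dif_neg (by simp [hp])]

lemma blk_bwdC (ha : Function.Injective a) (gh : Σ g : OPart n l j,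
      ({p // g.1 p = none} → {b : Fin r // Function.partialInv a b = none})) :
    blk a (bwdC a gh) = gh.1.1 := by
  funext p
  obtain ⟨o, hgp⟩ : ∃ o, gh.1.1 p = o := ⟨_, rfl⟩
  match o, hgp with
  | none, hgp =>
    rw [hgp, blk, bwdC_none a gh p hgp]
    exact (gh.2 ⟨p, hgp⟩).2
  | some i, hgp =>
    rw [hgp, blk, bwdC_some a gh p i hgp]
    exact Function.partialInv_left ha i

lemma pair_ext' (x y : Σ g : OPart n l j,
      ({p // g.1 p = none} → {b : Fin r // Function.partialInv a b = none}))
    (h1 : x.1.1 = y.1.1)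
    (h2 : ∀ (p : Fin n) (h : x.1.1 p = none) (h' : y.1.1 p = none),
      (x.2 ⟨p, h⟩).val = (y.2 ⟨p, h'⟩).val) : x = y := by
  obtain ⟨⟨g1, hg1⟩, e1⟩ := x
  obtain ⟨⟨g2, hg2⟩, e2⟩ := y
  dsimp at h1 h2
  subst h1
  refine Sigma.ext rfl (heq_of_eq ?_)
  funext p
  exact Subtype.ext (h2 p.1 p.2 p.2)

noncomputable def colorEquiv (ha : Function.Injective a) (j : Fin l → ℕ) :
    {c : Fin n → Fin r // ∀ i, cnt (blk a c) (some i) = j i} ≃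
      Σ g : OPart n l j,
        ({p // g.1 p = none} → {b : Fin r // Function.partialInv a b = none}) where
  toFun cs := ⟨⟨blk a cs.1, cs.2⟩, fun p => ⟨cs.1 p.1, p.2⟩⟩
  invFun gh := ⟨bwdC a gh, by
    intro i
    have : blk a (bwdC a gh) = gh.1.1 := blk_bwdC a ha gh
    rw [show cnt (blk a (bwdC a gh)) (some i) = cnt gh.1.1 (some i) by rw [this]]
    exact gh.1.2 i⟩
  left_inv cs := by
    apply Subtype.ext
    funext p
    obtain ⟨o, hgp⟩ : ∃ o, blk a cs.1 p = o := ⟨_, rfl⟩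
    match o, hgp with
    | none, hgp =>
      exact bwdC_none a _ p hgp
    | some i, hgp =>
      show bwdC a _ p = cs.1 p
      rw [bwdC_some a _ p i hgp]
      exact (Function.partialInv_of_injective ha i (cs.1 p)).mp hgp
  right_inv gh := by
    refine pair_ext' a _ _ (blk_bwdC a ha gh) ?_
    intro p h h'
    show bwdC a gh p = _
    rw [bwdC_none a gh p h']

lemma color_card (ha : Function.Injective a) (j : Fin l → ℕ) :
    Nat.card {c : Fin n → Fin r // ∀ i, cnt (blk a c) (some i) = j i}
      = Nat.card (OPart n l j) * (r - l) ^ (n - ∑ i, j i) := by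
  classical
  rw [Nat.card_congr (colorEquiv a ha j)]
  simp only [Nat.card_eq_fintype_card]
  rw [Fintype.card_sigma]
  have hterm : ∀ g : OPart n l j,
      Fintype.card ({p // g.1 p = none} → {b : Fin r // Function.partialInv a b = none})
        = (r - l) ^ (n - ∑ i, j i) := by
    intro g
    rw [← Nat.card_eq_fintype_card, Nat.card_fun, rest_card a ha]
    congr 1
    show cnt g.1 none = _
    rw [cnt_none_eq]
    congr 1
    exact Finset.sum_congr rfl fun i _ => g.2 i
  rw [Finset.sum_congr rfl fun g _ => hterm g, Finset.sum_const, Finset.card_univ, smul_eq_mul]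

end ColorCard


end CAux

open CAux in
/-- for distinct signs `a_1,…,a_l` and `d ≤ l`, avoiding the
homogeneous patterns `(1,2)_(a_i)` for `i ≤ d` and `(2,1)_(a_i)` for `i > d`. -/
theorem card_avoid_T_d_l (n r l d : ℕ) (hd : d ≤ l)
    (a : Fin l → Fin r) (ha : Function.Injective a) :
    Nat.card {x : SignedPerm n r //
        ∀ i : Fin l, ¬ SPContains
          (((if (i : ℕ) < d then 1 else Equiv.swap 0 1) : Equiv.Perm (Fin 2)),
            fun _ => a i) x} =
    ∑ j ∈ (Fintype.piFinset fun _ : Fin l => Finset.range (n + 1)).filter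
        (fun j => ∑ i, j i ≤ n),
      (n.factorial / ((∏ i, (j i).factorial) * (n - ∑ i, j i).factorial)) ^ 2 *
        (n - ∑ i, j i).factorial * (r - l) ^ (n - ∑ i, j i) := by
  classical
  set jv : (Fin n → Fin r) → (Fin l → ℕ) := fun c i => cnt (blk a c) (some i) with hjv
  have e1 : {x : SignedPerm n r //
        ∀ i : Fin l, ¬ SPContains
          (((if (i : ℕ) < d then 1 else Equiv.swap 0 1) : Equiv.Perm (Fin 2)),
            fun _ => a i) x} ≃
      Σ c : Fin n → Fin r, {σ : Equiv.Perm (Fin n) // Mono d a c σ} :=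
  { toFun := fun x => ⟨x.1.2, x.1.1, (avoid_iff ha x.1).mp x.2⟩
    invFun := fun y => ⟨(y.2.1, y.1), (avoid_iff ha _).mpr y.2.2⟩
    left_inv := fun x => rfl
    right_inv := fun y => rfl }
  rw [Nat.card_congr e1, Nat.card_eq_fintype_card, Fintype.card_sigma]
  have hstep : ∀ c : Fin n → Fin r,
      Fintype.card {σ : Equiv.Perm (Fin n) // Mono d a c σ} =
        Nat.card (OPart n l (jv c)) * (n - ∑ i, jv c i).factorial := by
    intro c
    rw [← Nat.card_eq_fintype_card]
    exact mono_card d a c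
  rw [Finset.sum_congr rfl fun c _ => hstep c]
  set s := (Fintype.piFinset fun _ : Fin l => Finset.range (n + 1)).filter
      (fun j => ∑ i, j i ≤ n) with hs
  have hmaps : ∀ c ∈ (univ : Finset (Fin n → Fin r)), jv c ∈ s := by
    intro c _
    rw [hs, Finset.mem_filter]
    constructor
    · rw [Fintype.mem_piFinset]
      intro i
      rw [Finset.mem_range]
      have := cnt_le (blk a c) (some i)
      simp only [hjv]
      omega
    · exact sum_cnt_some_le (blk a c)
  rw [← Finset.sum_fiberwise_of_maps_to hmaps
    (fun c => Nat.card (OPart n l (jv c)) * (n - ∑ i, jv c i).factorial)]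
  refine Finset.sum_congr rfl fun j hj => ?_
  have hsum_le : ∑ i, j i ≤ n := (Finset.mem_filter.mp hj).2
  have hinner : ∑ c ∈ univ.filter (fun c => jv c = j),
      Nat.card (OPart n l (jv c)) * (n - ∑ i, jv c i).factorial
        = (univ.filter (fun c => jv c = j)).card *
          (Nat.card (OPart n l j) * (n - ∑ i, j i).factorial) := by
    rw [Finset.sum_congr rfl (fun c hc => by rw [(Finset.mem_filter.mp hc).2]),
      Finset.sum_const, smul_eq_mul]
  rw [hinner]
  have hcardc : (univ.filter (fun c => jv c = j)).card
      = Nat.card (OPart n l j) * (r - l) ^ (n - ∑ i, j i) := by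
    rw [← Fintype.card_subtype, ← Nat.card_eq_fintype_card,
      Nat.card_congr (Equiv.subtypeEquivRight (fun c => funext_iff))]
    exact color_card a ha j
  rw [hcardc]
  have hD : 0 < (∏ i, (j i).factorial) * (n - ∑ i, j i).factorial :=
    Nat.mul_pos (Finset.prod_pos fun i _ => Nat.factorial_pos _) (Nat.factorial_pos _)
  have hP : n.factorial / ((∏ i, (j i).factorial) * (n - ∑ i, j i).factorial)
      = Nat.card (OPart n l j) :=
    Nat.div_eq_of_eq_mul_left hD (part_card j hsum_le).symm
  rw [hP]
  ring
end

section
/- For signed permutations with 2 signs (r = 2), the number of signed permutations in E_n^2 avoiding both (1,2) with all signs 1 and (2,1) with all signs 2 (or any pair β_(1), γ_(2) with β, γ ∈ S_2) equals the central binomial coefficient C(2n, n). -/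
open Finset Equiv

def MonoDir {n : ℕ} (b : Bool) (f : Fin n → Fin n) (s : Finset (Fin n)) : Prop :=
  ∀ ⦃p⦄, p ∈ s → ∀ ⦃q⦄, q ∈ s → p < q → (f p < f q ↔ b = true)

def dirMap (b : Bool) {m : ℕ} (i : Fin m) : Fin m := bif b then i else i.rev

lemma dirMap_dirMap (b : Bool) {m : ℕ} (i : Fin m) : dirMap b (dirMap b i) = i := by
  cases b <;> simp [dirMap, Fin.rev_rev]

lemma dirMap_injective (b : Bool) {m : ℕ} : Function.Injective (dirMap b (m := m)) := by
  cases b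
  · exact fun a b h => Fin.rev_injective h
  · exact fun a b h => h

lemma dirMap_surjective (b : Bool) {m : ℕ} : Function.Surjective (dirMap b (m := m)) :=
  fun i => ⟨dirMap b i, dirMap_dirMap b i⟩

lemma flip_lt {α β : Type*} [LinearOrder α] [LinearOrder β] {a b : α} {c d : β}
    (hab : a ≠ b) (hcd : c ≠ d) (h : a < b ↔ c < d) : b < a ↔ d < c := by
  constructor
  · intro hba
    by_contra hdc
    exact absurd (h.mpr (hcd.lt_or_gt.resolve_right hdc)) (asymm hba)
  · intro hdc
    by_contra hba
    exact absurd (h.mp (hab.lt_or_gt.resolve_right hba)) (asymm hdc)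

lemma contains_two_iff {n : ℕ} (β : Equiv.Perm (Fin 2)) (c : Fin 2) (x : SignedPerm n 2) :
    SPContains (β, fun _ => c) x ↔
      ∃ p q : Fin n, p < q ∧ x.2 p = c ∧ x.2 q = c ∧ (β 0 < β 1 ↔ x.1 p < x.1 q) := by
  constructor
  · rintro ⟨f, hf, hpat, hsgn⟩
    exact ⟨f 0, f 1, hf (by decide), hsgn 0, hsgn 1, hpat 0 1⟩
  · rintro ⟨p, q, hpq, hp, hq, hiff⟩
    have hβ : β 0 ≠ β 1 := fun h => by have := β.injective h; simp at this
    have hσ : x.1 p ≠ x.1 q := fun h => by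
      have := x.1.injective h; exact absurd this (ne_of_lt hpq)
    refine ⟨![p, q], ?_, ?_, ?_⟩
    · intro i j hij
      fin_cases i <;> fin_cases j <;> first
        | exact absurd hij (by decide)
        | simpa using hpq
    · intro i j
      fin_cases i <;> fin_cases j <;>
        simp only [Matrix.cons_val_zero, Matrix.cons_val_one, Matrix.head_cons, Fin.isValue]
      · simp
      · exact hiff
      · exact flip_lt hβ hσ hiff
      · simp
    · intro i; fin_cases i <;> simpa

lemma avoid_iff {n : ℕ} (β : Equiv.Perm (Fin 2)) (c : Fin 2) (x : SignedPerm n 2) :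
    ¬ SPContains (β, fun _ => c) x ↔
      MonoDir (decide (β 1 < β 0)) x.1 (univ.filter fun p => x.2 p = c) := by
  have hβ : β 0 ≠ β 1 := fun h => by have := β.injective h; simp at this
  rw [contains_two_iff]
  constructor
  · intro h p hp q hq hpq
    have hp' := (Finset.mem_filter.mp hp).2
    have hq' := (Finset.mem_filter.mp hq).2
    have hne : ¬ (β 0 < β 1 ↔ x.1 p < x.1 q) :=
      fun hc => h ⟨p, q, hpq, hp', hq', hc⟩
    have hσ : x.1 p ≠ x.1 q := fun h => absurd (x.1.injective h) (ne_of_lt hpq)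
    rcases hβ.lt_or_gt with h1 | h1
    · have : ¬ x.1 p < x.1 q := fun hc => hne (iff_of_true h1 hc)
      simp [asymm h1, h1, this]
    · have : x.1 p < x.1 q := by
        by_contra hc
        exact hne (iff_of_false (asymm h1) hc)
      simp [h1, this, asymm h1]
  · rintro h ⟨p, q, hpq, hp, hq, hiff⟩
    have hmem : ∀ r, x.2 r = c → r ∈ univ.filter fun s => x.2 s = c :=
      fun r hr => Finset.mem_filter.mpr ⟨Finset.mem_univ r, hr⟩
    have hmono := h (hmem p hp) (hmem q hq) hpq
    have hσ : x.1 p ≠ x.1 q := fun h => absurd (x.1.injective h) (ne_of_lt hpq)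
    rcases hβ.lt_or_gt with h1 | h1
    · have hlt := hiff.mp h1
      rw [hmono] at hlt
      simp only [decide_eq_true_eq] at hlt
      exact absurd hlt (asymm h1)
    · have hlt : x.1 p < x.1 q := hmono.mpr (by simp [h1])
      exact absurd (hiff.mpr hlt) (asymm h1)

lemma monoDir_unique {n : ℕ} (b : Bool) {σ τ : Fin n → Fin n}
    (hσi : Function.Injective σ) (hτi : Function.Injective τ) {A : Finset (Fin n)}
    (hσ : MonoDir b σ A) (hτ : MonoDir b τ A) (him : A.image σ = A.image τ) :
    ∀ p ∈ A, σ p = τ p := by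
  classical
  set e := A.orderEmbOfFin rfl with he
  have hrange : Set.range (fun i => e (dirMap b i)) = (A : Set (Fin n)) := by
    have h0 : (fun i => e (dirMap b i)) = ⇑e ∘ dirMap b := rfl
    rw [h0, Set.range_comp, (dirMap_surjective b).range_eq, Set.image_univ,
      Finset.range_orderEmbOfFin]
  have key : ∀ (f : Fin n → Fin n), Function.Injective f → MonoDir b f A →
      StrictMono (fun i => f (e (dirMap b i))) := by
    intro f hfi hf i j hij
    have hi : e (dirMap b i) ∈ A := A.orderEmbOfFin_mem rfl _
    have hj : e (dirMap b j) ∈ A := A.orderEmbOfFin_mem rfl _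
    cases b
    · have hlt : e (dirMap false j) < e (dirMap false i) := by
        apply (A.orderEmbOfFin rfl).strictMono
        simpa [dirMap] using Fin.rev_lt_rev.mpr hij
      have := hf hj hi hlt
      simp only [Bool.false_eq_true, iff_false] at this
      have hne : f (e (dirMap false i)) ≠ f (e (dirMap false j)) := by
        intro hc
        have := hfi hc
        exact absurd this (ne_of_gt hlt)
      exact hne.lt_or_gt.resolve_right this
    · have hlt : e (dirMap true i) < e (dirMap true j) := by
        apply (A.orderEmbOfFin rfl).strictMono
        simpa [dirMap] using hij
      exact (hf hi hj hlt).mpr rfl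
  have hu := key σ hσi hσ
  have hv := key τ hτi hτ
  have hreq : Set.range (fun i => σ (e (dirMap b i))) = Set.range (fun i => τ (e (dirMap b i))) := by
    have h1 : Set.range (fun i => σ (e (dirMap b i))) = σ '' (A : Set (Fin n)) := by
      have h0 : (fun i => σ (e (dirMap b i))) = σ ∘ (fun i => e (dirMap b i)) := rfl
      rw [h0, Set.range_comp, hrange]
    have h2 : Set.range (fun i => τ (e (dirMap b i))) = τ '' (A : Set (Fin n)) := by
      have h0 : (fun i => τ (e (dirMap b i))) = τ ∘ (fun i => e (dirMap b i)) := rfl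
      rw [h0, Set.range_comp, hrange]
    rw [h1, h2, ← Finset.coe_image, ← Finset.coe_image, him]
  have hwf : WellFoundedLT (Fin A.card) := inferInstance
  have heq := (hu.range_inj hv).mp hreq
  intro p hp
  obtain ⟨i, hi⟩ : ∃ i, e (dirMap b i) = p := by
    have : p ∈ Set.range (fun i => e (dirMap b i)) := hrange ▸ hp
    exact this
  rw [← hi]
  exact congrFun heq i

lemma exists_perm {n : ℕ} (b0 b1 : Bool) (A B : Finset (Fin n)) (h : A.card = B.card) :
    ∃ σ : Equiv.Perm (Fin n), MonoDir b0 σ A ∧ MonoDir b1 σ Aᶜ ∧ A.image σ = B := by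
  classical
  have hB : B.card = A.card := h.symm
  have hAc : Aᶜ.card = n - A.card := by rw [Finset.card_compl, Fintype.card_fin]
  have hBc : Bᶜ.card = n - A.card := by rw [Finset.card_compl, Fintype.card_fin, h]
  set g : Fin n → Fin n := fun p =>
    if hp : p ∈ A then B.orderEmbOfFin hB (dirMap b0 ((A.orderIsoOfFin rfl).symm ⟨p, hp⟩))
    else Bᶜ.orderEmbOfFin hBc (dirMap b1 ((Aᶜ.orderIsoOfFin hAc).symm ⟨p, Finset.mem_compl.mpr hp⟩))
    with hg
  have hgB : ∀ p (hp : p ∈ A), g p ∈ B := by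
    intro p hp; rw [hg]; simp only [dif_pos hp]; exact B.orderEmbOfFin_mem hB _
  have hgBc : ∀ p (hp : p ∉ A), g p ∈ Bᶜ := by
    intro p hp; rw [hg]; simp only [dif_neg hp]; exact Bᶜ.orderEmbOfFin_mem hBc _
  have hginj : Function.Injective g := by
    intro p q hpq
    by_cases hp : p ∈ A <;> by_cases hq : q ∈ A
    · rw [hg] at hpq; simp only [dif_pos hp, dif_pos hq] at hpq
      have := dirMap_injective b0 ((B.orderEmbOfFin hB).injective hpq)
      have := (A.orderIsoOfFin rfl).symm.injective this
      exact congrArg Subtype.val this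
    · exfalso
      have h1 := hgB p hp
      have h2 := hgBc q hq
      rw [hpq] at h1
      exact (Finset.mem_compl.mp h2) h1
    · have h1 := hgBc p hp
      have h2 := hgB q hq
      rw [hpq] at h1
      exact absurd h2 (Finset.mem_compl.mp h1)
    · rw [hg] at hpq; simp only [dif_neg hp, dif_neg hq] at hpq
      have := dirMap_injective b1 ((Bᶜ.orderEmbOfFin hBc).injective hpq)
      have := (Aᶜ.orderIsoOfFin hAc).symm.injective this
      exact congrArg Subtype.val this
  have hgbij : Function.Bijective g := (Finite.injective_iff_bijective).mp hginj
  refine ⟨Equiv.ofBijective g hgbij, ?_, ?_, ?_⟩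
  · intro p hp q hq hpq
    have hlt : ((A.orderIsoOfFin rfl).symm ⟨p, hp⟩) < ((A.orderIsoOfFin rfl).symm ⟨q, hq⟩) := by
      rw [OrderIso.lt_iff_lt]
      exact hpq
    show g p < g q ↔ b0 = true
    rw [hg]; simp only [dif_pos hp, dif_pos hq]
    cases b0
    · simp only [Bool.false_eq_true, iff_false]
      intro hc
      have := (B.orderEmbOfFin hB).lt_iff_lt.mp hc
      simp only [dirMap, Bool.cond_false] at this
      exact absurd (Fin.rev_lt_rev.mp this) (asymm hlt)
    · simp only [iff_true]
      apply (B.orderEmbOfFin hB).strictMono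
      simpa [dirMap] using hlt
  · intro p hp q hq hpq
    have hp' : p ∉ A := Finset.mem_compl.mp hp
    have hq' : q ∉ A := Finset.mem_compl.mp hq
    have hlt : ((Aᶜ.orderIsoOfFin hAc).symm ⟨p, hp⟩) < ((Aᶜ.orderIsoOfFin hAc).symm ⟨q, hq⟩) := by
      rw [OrderIso.lt_iff_lt]
      exact hpq
    show g p < g q ↔ b1 = true
    rw [hg]; simp only [dif_neg hp', dif_neg hq']
    cases b1
    · simp only [Bool.false_eq_true, iff_false]
      intro hc
      have := (Bᶜ.orderEmbOfFin hBc).lt_iff_lt.mp hc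
      simp only [dirMap, Bool.cond_false] at this
      exact absurd (Fin.rev_lt_rev.mp this) (asymm hlt)
    · simp only [iff_true]
      apply (Bᶜ.orderEmbOfFin hBc).strictMono
      simpa [dirMap] using hlt
  · apply Finset.eq_of_subset_of_card_le
    · intro v hv
      obtain ⟨p, hp, rfl⟩ := Finset.mem_image.mp hv
      exact hgB p hp
    · have h0 : ⇑(Equiv.ofBijective g hgbij) = g := rfl
      rw [h0, Finset.card_image_of_injective _ hginj, h]

lemma image_compl_perm {n : ℕ} (σ : Equiv.Perm (Fin n)) (s : Finset (Fin n)) :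
    sᶜ.image σ = (s.image σ)ᶜ := by
  ext v
  constructor
  · intro hv
    obtain ⟨p, hp, rfl⟩ := Finset.mem_image.mp hv
    rw [Finset.mem_compl] at hp ⊢
    intro hc
    obtain ⟨q, hq, hqv⟩ := Finset.mem_image.mp hc
    exact hp (σ.injective hqv ▸ hq)
  · intro hv
    rw [Finset.mem_compl] at hv
    refine Finset.mem_image.mpr ⟨σ.symm v, ?_, σ.apply_symm_apply v⟩
    rw [Finset.mem_compl]
    intro hc
    exact hv (Finset.mem_image.mpr ⟨σ.symm v, hc, σ.apply_symm_apply v⟩)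

lemma cardT (n : ℕ) :
    Nat.card {p : Finset (Fin n) × Finset (Fin n) // p.1.card = p.2.card} = (2 * n).choose n := by
  rw [Nat.card_eq_fintype_card, Fintype.card_subtype]
  have h1 : ∀ k : ℕ, (univ.filter fun B : Finset (Fin n) => B.card = k).card = n.choose k := by
    intro k
    rw [← Finset.powerset_univ, ← Finset.powersetCard_eq_filter, Finset.card_powersetCard,
      Finset.card_univ, Fintype.card_fin]
  have h2 : (univ.filter fun p : Finset (Fin n) × Finset (Fin n) => p.1.card = p.2.card).card
      = ∑ A : Finset (Fin n), n.choose A.card := by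
    rw [Finset.card_filter, Fintype.sum_prod_type]
    refine Finset.sum_congr rfl fun A _ => ?_
    rw [← Finset.card_filter]
    simp_rw [eq_comm (a := A.card)]
    exact h1 A.card
  rw [h2]
  have h3 : ∑ A : Finset (Fin n), n.choose A.card
      = ∑ k ∈ Finset.range (n + 1), n.choose k * n.choose k := by
    rw [← Finset.powerset_univ, Finset.sum_powerset]
    rw [Finset.card_univ, Fintype.card_fin]
    refine Finset.sum_congr rfl fun k _ => ?_
    rw [Finset.sum_powersetCard k univ (fun m => n.choose m), Finset.card_univ, Fintype.card_fin,
      smul_eq_mul, mul_comm]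
  rw [h3, two_mul, Nat.add_choose_eq, Finset.Nat.sum_antidiagonal_eq_sum_range_succ_mk]
  refine Finset.sum_congr rfl fun k hk => ?_
  rw [Nat.choose_symm (by simpa using Nat.lt_succ_iff.mp (Finset.mem_range.mp hk))]


/-- for `r = 2` and any `β, γ ∈ S_2`, the number of signed
permutations in `E_n^2` avoiding `β_(1)` and `γ_(2)` is `C(2n, n)`. -/
theorem card_avoid_beta_gamma (n : ℕ) (β γ : Equiv.Perm (Fin 2)) :
    Nat.card {x : SignedPerm n 2 //
        ¬ SPContains (β, fun _ => (0 : Fin 2)) x ∧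
        ¬ SPContains (γ, fun _ => (1 : Fin 2)) x} = (2 * n).choose n := by
  classical
  set b0 := decide (β 1 < β 0) with hb0
  set b1 := decide (γ 1 < γ 0) with hb1
  have hfilter : ∀ ε : Fin n → Fin 2,
      (univ.filter fun p => ε p = 1) = (univ.filter fun p => ε p = 0)ᶜ := by
    intro ε; ext p
    simp only [Finset.mem_filter, Finset.mem_univ, true_and, Finset.mem_compl]
    constructor
    · intro h h0; rw [h0] at h; exact absurd h (by decide)
    · intro h; exact (show ∀ v : Fin 2, ¬ v = 0 → v = 1 by decide) _ h
  have hchar : ∀ x : SignedPerm n 2,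
      (¬ SPContains (β, fun _ => (0 : Fin 2)) x ∧ ¬ SPContains (γ, fun _ => (1 : Fin 2)) x) ↔
      (MonoDir b0 x.1 (univ.filter fun p => x.2 p = 0) ∧
        MonoDir b1 x.1 (univ.filter fun p => x.2 p = 0)ᶜ) := by
    intro x
    rw [avoid_iff β 0 x, avoid_iff γ 1 x, hfilter x.2, hb0, hb1]
  let F : {x : SignedPerm n 2 //
        ¬ SPContains (β, fun _ => (0 : Fin 2)) x ∧
        ¬ SPContains (γ, fun _ => (1 : Fin 2)) x} →
      {p : Finset (Fin n) × Finset (Fin n) // p.1.card = p.2.card} :=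
    fun x => ⟨(univ.filter fun p => x.1.2 p = 0,
        (univ.filter fun p => x.1.2 p = 0).image x.1.1),
      (Finset.card_image_of_injective _ x.1.1.injective).symm⟩
  have hbij : Function.Bijective F := by
    constructor
    · intro x y hxy
      have hA : (univ.filter fun p => x.1.2 p = 0) = (univ.filter fun p => y.1.2 p = 0) :=
        congrArg Prod.fst (congrArg Subtype.val hxy)
      have hIm : (univ.filter fun p => x.1.2 p = 0).image x.1.1
          = (univ.filter fun p => y.1.2 p = 0).image y.1.1 :=
        congrArg Prod.snd (congrArg Subtype.val hxy)
      rw [hA] at hIm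
      have hε : x.1.2 = y.1.2 := by
        funext p
        have hmem : (p ∈ univ.filter fun q => x.1.2 q = 0) ↔
            (p ∈ univ.filter fun q => y.1.2 q = 0) := by rw [hA]
        simp only [Finset.mem_filter, Finset.mem_univ, true_and] at hmem
        by_cases hp : x.1.2 p = 0
        · rw [hp]; exact (hmem.mp hp).symm
        · have hp' : ¬ y.1.2 p = 0 := fun hc => hp (hmem.mpr hc)
          have h2 : ∀ v : Fin 2, ¬ v = 0 → v = 1 := by decide
          rw [h2 _ hp, h2 _ hp']
      obtain ⟨hx0, hx1⟩ := (hchar x.1).mp x.2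
      obtain ⟨hy0, hy1⟩ := (hchar y.1).mp y.2
      rw [hA] at hx0 hx1
      have hon := monoDir_unique b0 x.1.1.injective y.1.1.injective hx0 hy0 hIm
      have honc := monoDir_unique b1 x.1.1.injective y.1.1.injective hx1 hy1
        (by rw [image_compl_perm, image_compl_perm, hIm])
      have hσ : x.1.1 = y.1.1 := Equiv.ext fun p => by
        by_cases hp : p ∈ univ.filter fun q => y.1.2 q = 0
        · exact hon p hp
        · exact honc p (Finset.mem_compl.mpr hp)
      exact Subtype.ext (Prod.ext hσ hε)
    · rintro ⟨⟨A, B⟩, hcard⟩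
      obtain ⟨σ, h0, h1, him⟩ := exists_perm b0 b1 A B hcard
      set ε : Fin n → Fin 2 := fun p => if p ∈ A then 0 else 1 with hε
      have hAε : (univ.filter fun p => ε p = 0) = A := by
        ext p
        simp only [Finset.mem_filter, Finset.mem_univ, true_and, hε]
        by_cases hp : p ∈ A <;> simp [hp]
      have hx : ¬ SPContains (β, fun _ => (0 : Fin 2)) (σ, ε) ∧
          ¬ SPContains (γ, fun _ => (1 : Fin 2)) (σ, ε) := by
        apply (hchar (σ, ε)).mpr
        rw [show ((σ, ε) : SignedPerm n 2).2 = ε from rfl, hAε]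
        exact ⟨h0, h1⟩
      refine ⟨⟨(σ, ε), hx⟩, ?_⟩
      apply Subtype.ext
      show ((univ.filter fun p => ε p = 0), (univ.filter fun p => ε p = 0).image σ) = (A, B)
      rw [hAε, him]
  rw [Nat.card_eq_of_bijective F hbij]
  exact cardT n
end

section
/- For r ≥ 1 and T = {(1^(1), 2^(1)), (2^(1), 1^(1))} (the increasing and decreasing 2-patterns both homogeneously signed 1), |E_n^r(T)| = n! (n + r − 1)(r − 1)^{n−1} for all n ≥ 1. -/
open Finset Equiv

lemma contains_of {n r : ℕ} (x : SignedPerm n r) (z : Fin r) {i j : Fin n}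
    (hij : i < j) (h0 : x.2 i = z) (h1 : x.2 j = z) :
    SPContains ((1 : Equiv.Perm (Fin 2)), fun _ => z) x ∨
    SPContains ((Equiv.swap 0 1 : Equiv.Perm (Fin 2)), fun _ => z) x := by
  have hne : x.1 i ≠ x.1 j := fun h => absurd (x.1.injective h) hij.ne
  have hmono : StrictMono ![i, j] := by
    intro a b hab
    fin_cases a <;> fin_cases b <;>
      simp_all [Matrix.cons_val_zero, Matrix.cons_val_one, Matrix.head_cons]
  have hsgn : ∀ a : Fin 2, x.2 (![i, j] a) = z := by
    intro a; fin_cases a <;> simpa using ‹_›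
  rcases hne.lt_or_gt with h | h
  · left
    refine ⟨![i, j], hmono, ?_, fun a => hsgn a⟩
    intro a b
    fin_cases a <;> fin_cases b <;>
      simp [Equiv.Perm.one_apply, lt_irrefl, h, lt_asymm h]
  · right
    refine ⟨![i, j], hmono, ?_, fun a => hsgn a⟩
    intro a b
    fin_cases a <;> fin_cases b <;>
      simp [Equiv.swap_apply_left, Equiv.swap_apply_right, lt_irrefl, h, lt_asymm h]

lemma avoid_iff_s15 {n r : ℕ} (z : Fin r) (x : SignedPerm n r) :
    (¬ SPContains ((1 : Equiv.Perm (Fin 2)), fun _ => z) x ∧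
     ¬ SPContains ((Equiv.swap 0 1 : Equiv.Perm (Fin 2)), fun _ => z) x) ↔
    ∀ i j : Fin n, x.2 i = z → x.2 j = z → i = j := by
  constructor
  · rintro ⟨h1, h2⟩ i j hi hj
    by_contra hne
    rcases Ne.lt_or_gt hne with h | h
    · rcases contains_of x z h hi hj with c | c
      exacts [h1 c, h2 c]
    · rcases contains_of x z h hj hi with c | c
      exacts [h1 c, h2 c]
  · intro hQ
    constructor <;> rintro ⟨f, hmono, -, hsign⟩
    · have h01 : f 0 < f 1 := hmono (by decide)
      exact absurd (hQ _ _ (hsign 0) (hsign 1)) h01.ne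
    · have h01 : f 0 < f 1 := hmono (by decide)
      exact absurd (hQ _ _ (hsign 0) (hsign 1)) h01.ne

lemma count_signs (n s : ℕ) (hn : 1 ≤ n) :
    (univ.filter (fun g : Fin n → Fin (s+1) =>
      ∀ i j, g i = 0 → g j = 0 → i = j)).card = (n + s) * s ^ (n - 1) := by
  classical
  set F0 : Finset (Fin n → Fin (s+1)) :=
    Fintype.piFinset (fun _ => (univ.erase 0)) with hF0
  set FJ : Fin n → Finset (Fin n → Fin (s+1)) :=
    fun j => Fintype.piFinset (fun i => if i = j then {0} else univ.erase 0) with hFJ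
  have memFJ : ∀ (j : Fin n) (g : Fin n → Fin (s+1)),
      g ∈ FJ j ↔ ∀ i, (g i = 0 ↔ i = j) := by
    intro j g
    rw [hFJ]
    simp only [Fintype.mem_piFinset]
    constructor
    · intro h i
      have hi := h i
      by_cases hij : i = j
      · rw [if_pos hij, mem_singleton] at hi; exact ⟨fun _ => hij, fun _ => hi⟩
      · rw [if_neg hij, mem_erase] at hi
        exact ⟨fun h0 => absurd h0 hi.1, fun h' => absurd h' hij⟩
    · intro h i
      by_cases hij : i = j
      · rw [if_pos hij, mem_singleton]; exact (h i).mpr hij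
      · rw [if_neg hij, mem_erase]; exact ⟨fun h0 => hij ((h i).mp h0), mem_univ _⟩
  have memF0 : ∀ g : Fin n → Fin (s+1), g ∈ F0 ↔ ∀ i, g i ≠ 0 := by
    intro g; rw [hF0]; simp [Fintype.mem_piFinset]
  have hsplit : (univ.filter (fun g : Fin n → Fin (s+1) =>
      ∀ i j, g i = 0 → g j = 0 → i = j)) = F0 ∪ univ.biUnion FJ := by
    ext g
    simp only [mem_filter, mem_univ, true_and, mem_union, mem_biUnion, memF0, memFJ]
    constructor
    · intro hQ
      by_cases hz : ∃ i, g i = 0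
      · obtain ⟨j, hj⟩ := hz
        exact Or.inr ⟨j, fun i =>
          ⟨fun h0 => hQ i j h0 hj, fun h' => h' ▸ hj⟩⟩
      · push_neg at hz
        exact Or.inl hz
    · rintro (h | ⟨j, h⟩)
      · intro i j hi _; exact absurd hi (h i)
      · intro a b ha hb
        rw [(h a).mp ha, (h b).mp hb]
  have hdisj : Disjoint F0 (univ.biUnion FJ) := by
    rw [Finset.disjoint_left]
    intro g hg hg'
    rw [memF0] at hg
    rw [mem_biUnion] at hg'
    obtain ⟨j, -, hj⟩ := hg'
    exact hg j (((memFJ j g).mp hj j).mpr rfl)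
  have hcard0 : F0.card = s ^ n := by
    rw [hF0, Fintype.card_piFinset]
    simp [Finset.card_erase_of_mem]
  have hcardJ : ∀ j : Fin n, (FJ j).card = s ^ (n - 1) := by
    intro j
    rw [hFJ, Fintype.card_piFinset]
    have : ∀ i : Fin n, ((if i = j then ({0} : Finset (Fin (s+1))) else univ.erase 0)).card
        = if i = j then 1 else s := by
      intro i
      by_cases h : i = j <;> simp [h, Finset.card_erase_of_mem]
    rw [Finset.prod_congr rfl (fun i _ => this i)]
    rw [← Finset.mul_prod_erase univ _ (mem_univ j), if_pos rfl, one_mul]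
    rw [Finset.prod_congr rfl (fun i hi => if_neg (Finset.ne_of_mem_erase hi))]
    rw [Finset.prod_const, Finset.card_erase_of_mem (mem_univ j)]
    simp
  have hpair : ∀ j ∈ (univ : Finset (Fin n)), ∀ k ∈ (univ : Finset (Fin n)), j ≠ k →
      Disjoint (FJ j) (FJ k) := by
    intro j _ k _ hjk
    rw [Finset.disjoint_left]
    intro g hgj hgk
    have h1 : g j = 0 := ((memFJ j g).mp hgj j).mpr rfl
    exact hjk (((memFJ k g).mp hgk j).mp h1)
  rw [hsplit, Finset.card_union_of_disjoint hdisj, Finset.card_biUnion hpair]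
  rw [Finset.sum_congr rfl (fun j _ => hcardJ j), Finset.sum_const, hcard0]
  simp only [card_univ, Fintype.card_fin, smul_eq_mul]
  obtain ⟨m, rfl⟩ : ∃ m, n = m + 1 := ⟨n - 1, by omega⟩
  simp only [Nat.add_sub_cancel]
  ring

/-- Subtype of a product where the predicate only depends on the second factor. -/
def prodSubtypeSnd {α β : Type*} (Q : β → Prop) :
    {x : α × β // Q x.2} ≃ α × {b : β // Q b} :=
  ⟨fun x => (x.1.1, ⟨x.1.2, x.2⟩), fun y => ⟨(y.1, y.2.1), y.2.2⟩,
   fun _ => rfl, fun _ => rfl⟩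

/-- for `T = {(1^(1),2^(1)), (2^(1),1^(1))}`,
`|E_n^r(T)| = n! (n + r - 1)(r-1)^(n-1)` for `n ≥ 1`. -/
theorem card_avoid_both_homog_sign1 (n r : ℕ) (hr : 1 ≤ r) (hn : 1 ≤ n) :
    Nat.card {x : SignedPerm n r //
        ¬ SPContains ((1 : Equiv.Perm (Fin 2)), fun _ => (⟨0, hr⟩ : Fin r)) x ∧
        ¬ SPContains ((Equiv.swap 0 1 : Equiv.Perm (Fin 2)), fun _ => (⟨0, hr⟩ : Fin r)) x} =
      n.factorial * (n + r - 1) * (r - 1) ^ (n - 1) := by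
  classical
  obtain ⟨s, rfl⟩ : ∃ s, r = s + 1 := ⟨r - 1, by omega⟩
  have hz : (⟨0, hr⟩ : Fin (s+1)) = 0 := rfl
  rw [Nat.card_congr (Equiv.subtypeEquivRight (fun x => avoid_iff_s15 (⟨0, hr⟩ : Fin (s+1)) x))]
  rw [Nat.card_congr (prodSubtypeSnd (fun g : Fin n → Fin (s+1) =>
    ∀ i j : Fin n, g i = (⟨0, hr⟩ : Fin (s+1)) → g j = (⟨0, hr⟩ : Fin (s+1)) → i = j))]
  rw [Nat.card_prod, Nat.card_eq_fintype_card, Fintype.card_perm, Fintype.card_fin]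
  have : Nat.card {g : Fin n → Fin (s+1) //
      ∀ i j : Fin n, g i = (⟨0, hr⟩ : Fin (s+1)) → g j = (⟨0, hr⟩ : Fin (s+1)) → i = j}
      = (n + s) * s ^ (n - 1) := by
    rw [Nat.card_eq_fintype_card, Fintype.card_subtype]
    rw [← count_signs n s hn]
    apply Finset.card_bij (fun g _ => g) <;> simp [hz]
  rw [this]
  have h1 : n + (s + 1) - 1 = n + s := by rw [← Nat.add_assoc, Nat.add_sub_cancel]
  have h2 : s + 1 - 1 = s := Nat.succ_sub_one s
  rw [h1, h2, Nat.mul_assoc]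
end

section
/- For r ≥ 2 and T = {(1^(1), 2^(2)), (2^(2), 1^(1))}, the count p_n = |E_n^r(T)| satisfies p_n = n(r−1) p_{n−1} + n! (r−1)^{n−1} for n ≥ 1 with p_0 = 1, and hence p_n = n!(n + r − 1)(r−1)^{n−1} for n ≥ 1. -/
open Finset Equiv

/-!
A signed permutation avoids both patterns exactly when every symbol with sign 2 is smaller
than every symbol with sign 1, i.e. when its word of signs, read in increasing order of the
symbols, has every 2 before every 1. Hence `p n = n! * w n`, where `w n` counts words of
length `n` over `r` letters with every 2 before every 1. Splitting on the first letter gives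
`w (n+1) = (r-1)^n + (r-1) * w n` (a leading 1 forbids any later 2; any other leading letter
leaves a valid tail), so `w (n+1) = (n+r) * (r-1)^n`.
-/

def OccursBefore {ι α : Type*} [LT ι] (b a : α) (g : ι → α) : Prop :=
  ∀ i j, g i = b → g j = a → i < j

section OccursBefore

variable {α : Type*} {a b : α}

theorem occursBefore_comp_symm_iff {ι : Type*} [LT ι] (σ : Perm ι) (ε : ι → α) :
    OccursBefore b a (ε ∘ σ.symm) ↔ ∀ i j, ε i = b → ε j = a → σ i < σ j := by
  refine ⟨fun h i j hi hj => h (σ i) (σ j) (by simpa) (by simpa), fun h i j hi hj => ?_⟩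
  simpa using h (σ.symm i) (σ.symm j) hi hj

theorem occursBefore_cons_iff (hab : a ≠ b) {n : ℕ} (c : α) (g : Fin n → α) :
    OccursBefore b a (Fin.cons c g : Fin (n + 1) → α) ↔
      (c = a → ∀ i, g i ≠ b) ∧ OccursBefore b a g := by
  constructor
  · intro h
    refine ⟨fun hc i hi => (Fin.succ_pos i).not_gt (h i.succ 0 (by simpa) (by simpa)),
      fun i j hi hj => Fin.succ_lt_succ_iff.mp (h i.succ j.succ (by simpa) (by simpa))⟩
  · rintro ⟨hfirst, hrest⟩ i j hi hj
    cases i using Fin.cases with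
    | zero =>
      cases j using Fin.cases with
      | zero => exact absurd (hi.symm.trans hj) hab.symm
      | succ j => exact Fin.succ_pos j
    | succ i =>
      cases j using Fin.cases with
      | zero => exact absurd (by simpa using hi) (hfirst (by simpa using hj) i)
      | succ j =>
        exact Fin.succ_lt_succ_iff.mpr (hrest i j (by simpa using hi) (by simpa using hj))

theorem card_occursBefore_zero : Nat.card {g : Fin 0 → α // OccursBefore b a g} = 1 :=
  have : Unique {g : Fin 0 → α // OccursBefore b a g} :=
    ⟨⟨⟨finZeroElim, fun i => i.elim0⟩⟩, fun _ => Subtype.ext (funext fun i => i.elim0)⟩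
  Nat.card_unique

variable [Fintype α]

theorem card_occursBefore_succ (hab : a ≠ b) (n : ℕ) :
    Nat.card {g : Fin (n + 1) → α // OccursBefore b a g} =
      (Fintype.card α - 1) ^ n +
        (Fintype.card α - 1) * Nat.card {g : Fin n → α // OccursBefore b a g} := by
  let Q (c : α) (g : Fin n → α) : Prop := (c = a → ∀ i, g i ≠ b) ∧ OccursBefore b a g
  have split : {g : Fin (n + 1) → α // OccursBefore b a g} ≃ Σ c, {g // Q c g} :=
    ((Fin.consEquiv fun _ => α).symm.subtypeEquiv fun g => by
      rw [← Fin.cons_self_tail g, occursBefore_cons_iff hab]; rfl).trans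
    (Equiv.subtypeProdEquivSigmaSubtype Q)
  classical
  have first_a : Nat.card {g // Q a g} = (Fintype.card α - 1) ^ n := by
    have no_b : {g // Q a g} ≃ (Fin n → {c // c ≠ b}) :=
      (Equiv.subtypeEquivRight fun g => ⟨fun h => h.1 rfl,
        fun h => ⟨fun _ => h, fun i _ hi _ => absurd hi (h i)⟩⟩).trans Equiv.subtypePiEquivPi
    rw [Nat.card_congr no_b, Nat.card_fun, Nat.card_eq_fintype_card, Fintype.card_subtype_compl,
      Fintype.card_subtype_eq, Nat.card_eq_fintype_card, Fintype.card_fin]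
  have first_ne_a (c : α) (hc : c ∈ Finset.univ.erase a) :
      Nat.card {g // Q c g} = Nat.card {g : Fin n → α // OccursBefore b a g} := by
    simp only [Q, Finset.ne_of_mem_erase hc, false_implies, true_and]
  rw [Nat.card_congr split, Nat.card_sigma, ← Finset.add_sum_erase _ _ (Finset.mem_univ a),
    first_a, Finset.sum_congr rfl first_ne_a, Finset.sum_const, Finset.card_erase_of_mem
    (Finset.mem_univ a), Finset.card_univ, smul_eq_mul]

theorem card_occursBefore_succ_eq_mul_pow (hab : a ≠ b) (n : ℕ) :
    Nat.card {g : Fin (n + 1) → α // OccursBefore b a g} =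
      (n + Fintype.card α) * (Fintype.card α - 1) ^ n := by
  obtain ⟨k, hk⟩ : ∃ k, Fintype.card α = k + 1 :=
    Nat.exists_eq_add_one.mpr (Fintype.card_pos_iff.mpr ⟨a⟩)
  induction n with
  | zero =>
    rw [card_occursBefore_succ hab, card_occursBefore_zero, hk, Nat.add_sub_cancel]
    ring
  | succ n ih =>
    rw [card_occursBefore_succ hab, ih, hk, Nat.add_sub_cancel]
    ring

end OccursBefore

theorem card_perm_prod_subtype_comp_symm {ι α : Type*} [Finite ι] (P : (ι → α) → Prop) :
    Nat.card {x : Perm ι × (ι → α) // P (x.2 ∘ x.1.symm)} =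
      (Nat.card ι).factorial * Nat.card {g : ι → α // P g} := by
  rw [← Nat.card_perm, ← Nat.card_prod]
  exact Nat.card_congr
    { toFun x := (x.1.1, ⟨x.1.2 ∘ x.1.1.symm, x.2⟩)
      invFun y := ⟨(y.1, y.2.1 ∘ y.1), by simpa [Function.comp_assoc] using y.2.2⟩
      left_inv x := by ext <;> simp
      right_inv y := by ext <;> simp }

section SignedPattern

variable {n r : ℕ}

theorem spContains_one_iff (c d : Fin r) (x : SignedPerm n r) :
    SPContains ((1 : Perm (Fin 2)), ![c, d]) x ↔
      ∃ i j, i < j ∧ x.1 i < x.1 j ∧ x.2 i = c ∧ x.2 j = d := by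
  constructor
  · rintro ⟨f, hf, horder, hsign⟩
    exact ⟨f 0, f 1, hf (by decide), (horder 0 1).mp (by simp), hsign 0, hsign 1⟩
  · rintro ⟨i, j, hij, hlt, hi, hj⟩
    refine ⟨![i, j], Fin.strictMono_iff_lt_succ.mpr (by simpa using hij), fun k l => ?_,
      fun k => by fin_cases k <;> assumption⟩
    fin_cases k <;> fin_cases l <;> simp [hlt, hlt.not_gt]

theorem spContains_swap_iff (c d : Fin r) (x : SignedPerm n r) :
    SPContains (swap 0 1, ![c, d]) x ↔
      ∃ i j, i < j ∧ x.1 j < x.1 i ∧ x.2 i = c ∧ x.2 j = d := by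
  constructor
  · rintro ⟨f, hf, horder, hsign⟩
    exact ⟨f 0, f 1, hf (by decide), (horder 1 0).mp (by simp), hsign 0, hsign 1⟩
  · rintro ⟨i, j, hij, hlt, hi, hj⟩
    refine ⟨![i, j], Fin.strictMono_iff_lt_succ.mpr (by simpa using hij), fun k l => ?_,
      fun k => by fin_cases k <;> assumption⟩
    fin_cases k <;> fin_cases l <;> simp [hlt, hlt.not_gt]

theorem avoids_iff_occursBefore {a b : Fin r} (hab : a ≠ b) (x : SignedPerm n r) :
    ¬ SPContains ((1 : Perm (Fin 2)), ![a, b]) x ∧ ¬ SPContains (swap 0 1, ![b, a]) x ↔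
      OccursBefore b a (x.2 ∘ x.1.symm) := by
  rw [spContains_one_iff, spContains_swap_iff, occursBefore_comp_symm_iff]
  constructor
  · rintro ⟨avoid_inc, avoid_dec⟩ i j hi hj
    have hne : x.1 i ≠ x.1 j := fun h => hab (hj ▸ hi ▸ congrArg x.2 (x.1.injective h)).symm
    refine lt_of_not_ge fun hle => ?_
    rcases lt_or_gt_of_ne fun h : i = j => hne (congrArg x.1 h) with hij | hji
    · exact avoid_dec ⟨i, j, hij, lt_of_le_of_ne hle hne.symm, hi, hj⟩
    · exact avoid_inc ⟨j, i, hji, lt_of_le_of_ne hle hne.symm, hj, hi⟩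
  · intro h
    exact ⟨fun ⟨i, j, _, hlt, hi, hj⟩ => (h j i hj hi).asymm hlt,
      fun ⟨i, j, _, hlt, hi, hj⟩ => (h i j hi hj).asymm hlt⟩

end SignedPattern

/-- for `T = {(1^(1),2^(2)), (2^(2),1^(1))}`, the count `p_n`
satisfies `p_n = n(r-1)p_{n-1} + n!(r-1)^{n-1}` and equals
`n!(n+r-1)(r-1)^{n-1}` for `n ≥ 1`, with `p_0 = 1`. -/
theorem recurrence_case_iv (r : ℕ) (hr : 2 ≤ r) (p : ℕ → ℕ)
    (hp : ∀ n, p n = Nat.card {x : SignedPerm n r //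
        ¬ SPContains ((1 : Equiv.Perm (Fin 2)),
            ![(⟨0, by omega⟩ : Fin r), ⟨1, hr⟩]) x ∧
        ¬ SPContains (Equiv.swap 0 1,
            ![(⟨1, hr⟩ : Fin r), ⟨0, by omega⟩]) x}) :
    p 0 = 1 ∧ ∀ n, 1 ≤ n →
      p n = n * (r - 1) * p (n - 1) + n.factorial * (r - 1) ^ (n - 1) ∧
      p n = n.factorial * (n + r - 1) * (r - 1) ^ (n - 1) := by
  have hab : (⟨0, by omega⟩ : Fin r) ≠ ⟨1, hr⟩ := by simp
  have hp_words (n : ℕ) :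
      p n = n.factorial *
        Nat.card {g : Fin n → Fin r // OccursBefore ⟨1, hr⟩ ⟨0, by omega⟩ g} := by
    rw [hp, Nat.card_congr (Equiv.subtypeEquivRight (avoids_iff_occursBefore hab)),
      card_perm_prod_subtype_comp_symm, Nat.card_eq_fintype_card, Fintype.card_fin]
  refine ⟨by rw [hp_words, card_occursBefore_zero]; rfl, fun n hn => ?_⟩
  obtain ⟨m, rfl⟩ := Nat.exists_eq_add_of_le' hn
  rw [Nat.add_sub_cancel, show m + 1 + r - 1 = m + r by omega]
  constructor
  · rw [hp_words, hp_words, card_occursBefore_succ hab, Fintype.card_fin, Nat.factorial_succ]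
    ring
  · rw [hp_words, card_occursBefore_succ_eq_mul_pow hab, Fintype.card_fin]
    ring
end
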